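/- arXiv:1604.07986 — 5 statements merged into one kernel-verified Lean document; each statement's English description precedes it below -/
import Mathlib

section
/- Let D ⊆ F = F^× × [q_1, …, q_s] be a seminormal finitely primary monoid of rank s. Then the set of atoms of D is A(D) = {ε q_1^{k_1} ⋯ q_s^{k_s} : ε ∈ F^× and min{k_1, …, k_s} = 1}. -/
namespace ArXivSeminormal

attribute [local instance] Classical.propDecidable

noncomputable section

/-! ### Generic factorization theory in commutative monoids -/

variable {M : Type*} [CommMonoid M]

/-- The set of factorizations of `a` (in the sense of `Z(a)`): multisets of irreducible
elements of the reduced monoid (modelled by `Associates M`) whose product is the class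
of `a`. -/
def Factorizations (a : M) : Set (Multiset (Associates M)) :=
  {z | (∀ x ∈ z, Irreducible x) ∧ z.prod = Associates.mk a}

/-- The set of lengths `L(a)` of an element `a`. -/
def lengthSet (a : M) : Set ℕ :=
  {k | ∃ z ∈ Factorizations a, Multiset.card z = k}

/-- The set of (successive) distances `Δ(L)` of a set `L ⊆ ℕ`. -/
def DeltaSet (L : Set ℕ) : Set ℕ :=
  {d | ∃ k l, k ∈ L ∧ l ∈ L ∧ k < l ∧ (∀ m, k < m → m < l → m ∉ L) ∧ d = l - k}

/-- The set of distances `Δ(H)` of a monoid `H`. -/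
def DeltaMonoid (M : Type*) [CommMonoid M] : Set ℕ :=
  ⋃ a : M, DeltaSet (lengthSet a)

/-- The distance between two factorizations:
`d(z,z') = max (card (z - gcd z z')) (card (z' - gcd z z'))`. -/
def factorDist (z z' : Multiset (Associates M)) : ℕ :=
  max (Multiset.card (z - z')) (Multiset.card (z' - z))

/-- The catenary degree `c(H)` of a monoid `H`: the smallest `N ∈ ℕ∞` such that any two
factorizations of any element are connected by a chain of factorizations with consecutive
distances at most `N`. -/
def catenaryDegree (M : Type*) [CommMonoid M] : ℕ∞ :=
  sInf {N : ℕ∞ | ∀ (a : M), ∀ z ∈ Factorizations a, ∀ z' ∈ Factorizations a,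
    ∃ c : List (Multiset (Associates M)), c.head? = some z ∧ c.getLast? = some z' ∧
      (∀ w ∈ c, w ∈ Factorizations a) ∧
      List.Chain' (fun u v => (factorDist u v : ℕ∞) ≤ N) c}

/-- A monoid is factorial if every element has a unique factorization. -/
def IsFactorialMonoid (M : Type*) [CommMonoid M] : Prop :=
  ∀ a : M, ∃! z : Multiset (Associates M), z ∈ Factorizations a

/-! ### Free commutative monoids, block monoids, Davenport constant -/

/-- The free abelian (multiplicatively written) monoid on a set `P`. -/
abbrev FreeCM (P : Type*) := Multiplicative (Multiset P)

/-- The sum homomorphism `σ : F(G) → G`. -/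
def sigmaHom (G : Type*) [AddCommMonoid G] : FreeCM G →* Multiplicative G :=
  AddMonoidHom.toMultiplicative
    { toFun := Multiset.sum
      map_zero' := Multiset.sum_zero
      map_add' := Multiset.sum_add }

/-- The monoid of zero-sum sequences over `G`. -/
def BlockMonoid (G : Type*) [AddCommMonoid G] : Submonoid (FreeCM G) :=
  MonoidHom.mker (sigmaHom G)

/-- The Davenport constant of `G`: the supremum of lengths of minimal zero-sum sequences. -/
def Davenport (G : Type*) [AddCommMonoid G] : ℕ :=
  sSup {k | ∃ u : BlockMonoid G, Irreducible u ∧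
    Multiset.card (Multiplicative.toAdd (u : FreeCM G)) = k}

/-! ### Reduced seminormal finitely primary monoids -/

/-- The `Fin s →₀ ℕ` function with all values `1`, i.e. the exponent vector of
`q_1 ⋯ q_s`. -/
def allOnes (s : ℕ) : Fin s →₀ ℕ := Finsupp.equivFunOnFinite.symm fun _ => 1

/-- The reduced seminormal finitely primary monoid of rank `s` with unit group `U` of the
complete integral closure:
`D = {ε q_1^{k_1} ⋯ q_s^{k_s} : ε ∈ U, all k_j ≥ 1} ∪ {1} ⊆ U × [q_1,…,q_s]`. -/
def seminormalD (U : Type*) [CommGroup U] (s : ℕ) :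
    Submonoid (U × Multiplicative (Fin s →₀ ℕ)) where
  carrier := {x | x = 1 ∨ ∀ j, 1 ≤ Multiplicative.toAdd x.2 j}
  one_mem' := Or.inl rfl
  mul_mem' := by
    rintro a b (rfl | ha) (rfl | hb)
    · exact Or.inl (mul_one 1)
    · rw [Set.mem_setOf_eq, one_mul]; exact Or.inr hb
    · rw [Set.mem_setOf_eq, mul_one]; exact Or.inr ha
    · refine Or.inr fun j => ?_
      have h1 := ha j
      have h2 := hb j
      have h3 : Multiplicative.toAdd ((a * b).2) j
          = Multiplicative.toAdd a.2 j + Multiplicative.toAdd b.2 j := rfl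
      omega

/-! ### T-block monoids (Setting (S)) -/

/-- The monoid `T = D_1 × ⋯ × D_n`. -/
abbrev Tm {n : ℕ} (U : Fin n → Type*) [∀ i, CommGroup (U i)] (s : Fin n → ℕ) :=
  ∀ i, ↥(seminormalD (U i) (s i))

/-- The monoid `D̂_1 × ⋯ × D̂_n`. -/
abbrev HatTm {n : ℕ} (U : Fin n → Type*) [∀ i, CommGroup (U i)] (s : Fin n → ℕ) :=
  ∀ i, U i × Multiplicative (Fin (s i) →₀ ℕ)

/-- The monoid `F = F(G) × T`. -/
abbrev Fm (G : Type*) {n : ℕ} (U : Fin n → Type*) [∀ i, CommGroup (U i)] (s : Fin n → ℕ) :=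
  FreeCM G × Tm U s

/-- The homomorphism `F → G`, `S·t ↦ σ(S) + ι(t)`, whose kernel is the `T`-block monoid;
it computes the class `[a] ∈ G ≅ q(F)/q(B)` of `a ∈ F`. -/
def TBlockPhi (G : Type*) [AddCommGroup G] {n : ℕ} (U : Fin n → Type*) [∀ i, CommGroup (U i)]
    (s : Fin n → ℕ) (iota : Tm U s →* Multiplicative G) : Fm G U s →* Multiplicative G :=
  ((sigmaHom G).comp (MonoidHom.fst _ _)) * (iota.comp (MonoidHom.snd _ _))

/-- The `T`-block monoid `B = B(G, T, ι) = {S·t ∈ F(G) × T : σ(S) + ι(t) = 0}`. -/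
def TBlock (G : Type*) [AddCommGroup G] {n : ℕ} (U : Fin n → Type*) [∀ i, CommGroup (U i)]
    (s : Fin n → ℕ) (iota : Tm U s →* Multiplicative G) : Submonoid (Fm G U s) :=
  MonoidHom.mker (TBlockPhi G U s iota)

/-- The inclusion `T = D_1 × ⋯ × D_n → D̂_1 × ⋯ × D̂_n`. -/
def embedT {n : ℕ} (U : Fin n → Type*) [∀ i, CommGroup (U i)] (s : Fin n → ℕ) :
    Tm U s →* HatTm U s :=
  Pi.monoidHom fun i => (seminormalD (U i) (s i)).subtype.comp
    (Pi.evalMonoidHom (fun j => ↥(seminormalD (U j) (s j))) i)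

/-- The norm `‖A‖ = k + 2·Σ_i max L_{D_i}(a_i)` of `A = g_1⋯g_k a_1⋯a_n ∈ F`. -/
def normF (G : Type*) {n : ℕ} (U : Fin n → Type*) [∀ i, CommGroup (U i)] (s : Fin n → ℕ)
    (A : Fm G U s) : ℕ :=
  Multiset.card (Multiplicative.toAdd A.1) + 2 * ∑ i, sSup (lengthSet (A.2 i))

/-- The class `[ε] ∈ G` of a unit `ε ∈ D̂_ν^×`. -/
def classOfUnit {G : Type*} [AddCommGroup G] {n : ℕ} (U : Fin n → Type*)
    [∀ i, CommGroup (U i)] (s : Fin n → ℕ) (iotahat : HatTm U s →* Multiplicative G)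
    (ν : Fin n) (ε : U ν) : Multiplicative G :=
  iotahat (Pi.mulSingle ν (ε, 1))

/-- The class `[q_{ν,j}] ∈ G` of the prime `q_{ν,j}` of `D̂_ν`. -/
def classOfPrime {G : Type*} [AddCommGroup G] {n : ℕ} (U : Fin n → Type*)
    [∀ i, CommGroup (U i)] (s : Fin n → ℕ) (iotahat : HatTm U s →* Multiplicative G)
    (ν : Fin n) (j : Fin (s ν)) : Multiplicative G :=
  iotahat (Pi.mulSingle ν (1, Multiplicative.ofAdd (Finsupp.single j 1)))

/-- The quantity `d_ν ∈ {-1, 0, 1, 2}` from Theorem 3.3 (for `G = {0, e}` of order two). -/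
def dval {G : Type*} [AddCommGroup G] {n : ℕ} (U : Fin n → Type*) [∀ i, CommGroup (U i)]
    (s : Fin n → ℕ) (iotahat : HatTm U s →* Multiplicative G) (e : G) (ν : Fin n) : ℤ :=
  if (∀ ε : U ν, classOfUnit U s iotahat ν ε = 1) ∧ s ν = 2 ∧
      (Finset.univ.filter fun j : Fin (s ν) =>
        classOfPrime U s iotahat ν j = Multiplicative.ofAdd e).card = 2 then 2
  else if (∀ ε : U ν, classOfUnit U s iotahat ν ε = 1) ∧ s ν = 1 then 0
  else if (∀ ε : U ν, classOfUnit U s iotahat ν ε = 1) ∧ 2 ≤ s ν ∧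
      (Finset.univ.filter fun j : Fin (s ν) =>
        classOfPrime U s iotahat ν j = Multiplicative.ofAdd e).card = 0 then -1
  else 1

/-- Lemma 2.1(1): the atoms of a seminormal finitely primary monoid
`D ⊆ F = F^× × [q_1,…,q_s]` of rank `s` are exactly the elements
`ε q_1^{k_1} ⋯ q_s^{k_s}` with `ε ∈ F^×` and `min{k_1,…,k_s} = 1`. -/
theorem atoms_of_seminormal_finitely_primary
    {U : Type*} [CommGroup U] {s : ℕ} (hs : 1 ≤ s)
    (D : Submonoid (U × Multiplicative (Fin s →₀ ℕ)))
    (hprimary : ∀ x : D, ¬ IsUnit x →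
      ∀ j, 1 ≤ Multiplicative.toAdd (x : U × Multiplicative (Fin s →₀ ℕ)).2 j)
    (hconductor : ∃ α : ℕ, 1 ≤ α ∧ ∀ y : U × Multiplicative (Fin s →₀ ℕ),
      ((1 : U), Multiplicative.ofAdd (allOnes s)) ^ α * y ∈ D)
    (hseminormal : (D : Set (U × Multiplicative (Fin s →₀ ℕ))) =
      {x : U × Multiplicative (Fin s →₀ ℕ) | ∀ j, 1 ≤ Multiplicative.toAdd x.2 j} ∪
        {x : U × Multiplicative (Fin s →₀ ℕ) | ∃ h : x ∈ D, IsUnit (⟨x, h⟩ : D)}) :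
    {x : U × Multiplicative (Fin s →₀ ℕ) | ∃ h : x ∈ D, Irreducible (⟨x, h⟩ : D)} =
      {x : U × Multiplicative (Fin s →₀ ℕ) |
        (∀ j, 1 ≤ Multiplicative.toAdd x.2 j) ∧
        ∃ j, Multiplicative.toAdd x.2 j = 1} := by
  have j0 : Fin s := ⟨0, hs⟩
  -- helper: second components of products add
  have hmul2 : ∀ a b : U × Multiplicative (Fin s →₀ ℕ), ∀ j,
      Multiplicative.toAdd (a * b).2 j =
        Multiplicative.toAdd a.2 j + Multiplicative.toAdd b.2 j := fun a b j => rfl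
  -- helper: an element of D with some positive exponent is not a unit of D
  have hnotunit : ∀ (a : D) (j : Fin s),
      1 ≤ Multiplicative.toAdd (a : U × Multiplicative (Fin s →₀ ℕ)).2 j → ¬ IsUnit a := by
    rintro a j hj hu
    obtain ⟨b, hb⟩ := isUnit_iff_exists_inv.mp hu
    have hb' : (a : U × Multiplicative (Fin s →₀ ℕ)) * (b : U × Multiplicative (Fin s →₀ ℕ))
        = 1 := by exact_mod_cast congrArg (Subtype.val) hb
    have h2 : Multiplicative.toAdd ((a : U × Multiplicative (Fin s →₀ ℕ)) *
        (b : U × Multiplicative (Fin s →₀ ℕ))).2 j = 0 := by rw [hb']; rfl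
    rw [hmul2] at h2
    omega
  ext x
  simp only [Set.mem_setOf_eq]
  constructor
  · rintro ⟨h, hirr⟩
    have hall : ∀ j, 1 ≤ Multiplicative.toAdd x.2 j := hprimary ⟨x, h⟩ hirr.not_isUnit
    refine ⟨hall, ?_⟩
    by_contra hno
    push_neg at hno
    have h2 : ∀ j, 2 ≤ Multiplicative.toAdd x.2 j := fun j => by
      have h1 := hall j; have h2 := hno j; omega
    -- split x = a * b with both factors non-units
    set g : Fin s →₀ ℕ :=
      Finsupp.equivFunOnFinite.symm (fun j => Multiplicative.toAdd x.2 j - 1) with hg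
    set a : U × Multiplicative (Fin s →₀ ℕ) := (x.1, Multiplicative.ofAdd g) with ha
    set b : U × Multiplicative (Fin s →₀ ℕ) :=
      ((1 : U), Multiplicative.ofAdd (allOnes s)) with hb
    have hga : ∀ j, Multiplicative.toAdd a.2 j = Multiplicative.toAdd x.2 j - 1 := by
      intro j; simp [ha, hg]
    have hgb : ∀ j, Multiplicative.toAdd b.2 j = 1 := by
      intro j; simp [hb, allOnes]
    have hx : x = a * b := by
      refine Prod.ext ?_ ?_
      · simp [ha, hb]
      · have : Multiplicative.toAdd x.2 = Multiplicative.toAdd (a * b).2 := by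
          ext j
          rw [hmul2, hga, hgb]
          have := h2 j; omega
        simpa using congrArg Multiplicative.ofAdd this
    have haD : a ∈ D := by
      have : a ∈ (D : Set (U × Multiplicative (Fin s →₀ ℕ))) := by
        rw [hseminormal]
        exact Or.inl (fun j => by rw [hga]; have := h2 j; omega)
      exact this
    have hbD : b ∈ D := by
      have : b ∈ (D : Set (U × Multiplicative (Fin s →₀ ℕ))) := by
        rw [hseminormal]
        exact Or.inl (fun j => by rw [hgb])
      exact this
    have hxab : (⟨x, h⟩ : D) = ⟨a, haD⟩ * ⟨b, hbD⟩ := by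
      exact Subtype.ext (by simpa using hx)
    rcases hirr.isUnit_or_isUnit hxab with hu | hu
    · exact hnotunit ⟨a, haD⟩ j0 (by rw [hga]; have := h2 j0; omega) hu
    · exact hnotunit ⟨b, hbD⟩ j0 (by rw [hgb]) hu
  · rintro ⟨hall, j1, hj1⟩
    have h : x ∈ D := by
      have : x ∈ (D : Set (U × Multiplicative (Fin s →₀ ℕ))) := by
        rw [hseminormal]; exact Or.inl hall
      exact this
    refine ⟨h, ⟨hnotunit ⟨x, h⟩ j1 hj1.ge, ?_⟩⟩
    intro a b hab
    by_contra hcon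
    push_neg at hcon
    have hxa := hprimary a hcon.1 j1
    have hxb := hprimary b hcon.2 j1
    have hx : x = (a : U × Multiplicative (Fin s →₀ ℕ)) *
        (b : U × Multiplicative (Fin s →₀ ℕ)) :=
      congrArg Subtype.val hab
    have : Multiplicative.toAdd x.2 j1 =
        Multiplicative.toAdd (a : U × Multiplicative (Fin s →₀ ℕ)).2 j1 +
        Multiplicative.toAdd (b : U × Multiplicative (Fin s →₀ ℕ)).2 j1 := by
      rw [hx, hmul2]
    omega

end
end ArXivSeminormal
end

section
/- Let D ⊆ F = F^× × [q_1, …, q_s] be a seminormal finitely primary monoid of rank s. If s = 1, then the catenary degree satisfies c(D) ≤ 2 and D is half-factorial. -/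
namespace ArXivSeminormal

attribute [local instance] Classical.propDecidable

noncomputable section

/-! ### Generic factorization theory in commutative monoids -/

variable {M : Type*} [CommMonoid M]

/-! In rank one, seminormality says `D = {ε q^k : k ≥ 1} ∪ D^×`. The exponent of `q` is then an
additive degree on `D_red` that vanishes only at `1` and for which `x ∣ y` as soon as
`deg x < deg y`. Hence the atoms are exactly the elements of degree one, and every factorization
of `a` has length `deg a`. Given factorizations `x y w` and `x' w'` of one element, `x' ∣ x y`
yields `x y = x' c` with `c` an atom; replacing `x y` by `x' c` is a step of distance at most
`2`, and cancelling `x'` leaves two shorter factorizations of one element. -/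

open Relation

instance {H : Type*} [CommMonoid H] [IsLeftCancelMul H] : IsLeftCancelMul (Associates H) where
  mul_left_cancel a := by
    intro b c (h : a * b = a * c)
    obtain ⟨x, rfl⟩ := Associates.mk_surjective a
    obtain ⟨y, rfl⟩ := Associates.mk_surjective b
    obtain ⟨z, rfl⟩ := Associates.mk_surjective c
    rw [Associates.mk_mul_mk, Associates.mk_mul_mk, Associates.mk_eq_mk_iff_associated] at h
    obtain ⟨u, hu⟩ := h
    rw [mul_assoc] at hu
    exact Associates.mk_eq_mk_iff_associated.mpr ⟨u, mul_left_cancel hu⟩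

lemma factorDist_add_left (w u v : Multiset (Associates M)) :
    factorDist (w + u) (w + v) = factorDist u v := by
  simp only [factorDist, add_tsub_add_eq_tsub_left]

lemma factorDist_cons_cons (a : Associates M) (u v : Multiset (Associates M)) :
    factorDist (a ::ₘ u) (a ::ₘ v) = factorDist u v := by
  simpa only [Multiset.singleton_add] using factorDist_add_left {a} u v

lemma factorDist_le_max_card (u v : Multiset (Associates M)) :
    factorDist u v ≤ max (Multiset.card u) (Multiset.card v) :=
  max_le_max (Multiset.card_le_card tsub_le_self) (Multiset.card_le_card tsub_le_self)

lemma factorDist_cons_cons_le_two (x y x' y' : Associates M) (w : Multiset (Associates M)) :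
    factorDist (x ::ₘ y ::ₘ w) (x' ::ₘ y' ::ₘ w) ≤ 2 := by
  have h := factorDist_add_left w {x, y} {x', y'}
  simp only [Multiset.insert_eq_cons, add_comm w, Multiset.cons_add, Multiset.singleton_add] at h
  rw [h]
  simpa using factorDist_le_max_card {x, y} {x', y'}

def FactorizationStep (N : ℕ) (u v : Multiset (Associates M)) : Prop :=
  (∀ x ∈ v, Irreducible x) ∧ u.prod = v.prod ∧ factorDist u v ≤ N

lemma FactorizationStep.cons {N : ℕ} {x : Associates M} (hx : Irreducible x)
    {u v : Multiset (Associates M)} (h : FactorizationStep N u v) :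
    FactorizationStep N (x ::ₘ u) (x ::ₘ v) :=
  ⟨Multiset.forall_mem_cons.mpr ⟨hx, h.1⟩, by rw [Multiset.prod_cons, Multiset.prod_cons, h.2.1],
    (factorDist_cons_cons x u v).le.trans h.2.2⟩

lemma catenaryDegree_le_of_reflTransGen (N : ℕ)
    (h : ∀ z z' : Multiset (Associates M), (∀ x ∈ z, Irreducible x) →
      (∀ x ∈ z', Irreducible x) → z.prod = z'.prod → ReflTransGen (FactorizationStep N) z z') :
    catenaryDegree M ≤ N := by
  refine sInf_le fun a z hz z' hz' => ?_
  obtain ⟨l, hchain, hlast⟩ := List.exists_isChain_cons_of_relationReflTransGen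
    (h z z' hz.1 hz'.1 (hz.2.trans hz'.2.symm))
  refine ⟨z :: l, rfl, by rw [List.getLast?_eq_some_getLast (List.cons_ne_nil _ _), hlast], ?_,
    hchain.imp fun u v huv => by exact_mod_cast huv.2.2⟩
  exact hchain.induction (· ∈ Factorizations a) _
    (fun u v huv hu => ⟨huv.1, huv.2.1.symm.trans hu.2⟩) fun _ => hz

/-- `deg` abstracts the exponent of the prime `q` on `D_red` for a finitely primary monoid `D` of
rank one; the divisibility axiom `dvd_of_lt` is what seminormality provides. -/
structure IsRankOneSeminormalDegree (deg : Associates M → ℕ) : Prop where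
  map_mul : ∀ x y, deg (x * y) = deg x + deg y
  eq_one_of_eq_zero : ∀ x, deg x = 0 → x = 1
  dvd_of_lt : ∀ x y, deg x < deg y → x ∣ y
  exists_eq_one : ∃ t, deg t = 1

namespace IsRankOneSeminormalDegree

variable {deg : Associates M → ℕ}

lemma map_one (hd : IsRankOneSeminormalDegree deg) : deg 1 = 0 := by
  have := hd.map_mul 1 1
  rw [mul_one] at this
  omega

lemma isUnit_iff (hd : IsRankOneSeminormalDegree deg) {x : Associates M} :
    IsUnit x ↔ deg x = 0 := by
  rw [Associates.isUnit_iff_eq_one]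
  exact ⟨fun h => h ▸ hd.map_one, hd.eq_one_of_eq_zero x⟩

lemma irreducible_iff (hd : IsRankOneSeminormalDegree deg) {x : Associates M} :
    Irreducible x ↔ deg x = 1 := by
  constructor
  · intro hx
    have hx0 : deg x ≠ 0 := fun h0 => hx.not_isUnit (hd.isUnit_iff.mpr h0)
    by_contra hx1
    obtain ⟨t, ht⟩ := hd.exists_eq_one
    obtain ⟨b, rfl⟩ := hd.dvd_of_lt t x (by omega)
    rw [hd.map_mul] at hx0 hx1
    rcases hx.isUnit_or_isUnit rfl with hu | hu <;> rw [hd.isUnit_iff] at hu <;> omega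
  · intro hx
    refine ⟨fun hu => by rw [hd.isUnit_iff] at hu; omega, fun a b hab => ?_⟩
    rw [hab, hd.map_mul] at hx
    simp only [hd.isUnit_iff]
    omega

lemma card_eq_deg_prod (hd : IsRankOneSeminormalDegree deg) {z : Multiset (Associates M)}
    (hz : ∀ x ∈ z, Irreducible x) : Multiset.card z = deg z.prod := by
  induction z using Multiset.induction_on with
  | empty => simp [hd.map_one]
  | cons a z ih =>
    rw [Multiset.forall_mem_cons] at hz
    rw [Multiset.card_cons, Multiset.prod_cons, hd.map_mul, ih hz.2, (hd.irreducible_iff).mp hz.1,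
      add_comm]

lemma exists_factorization (hd : IsRankOneSeminormalDegree deg) (a : Associates M) :
    ∃ z : Multiset (Associates M), (∀ x ∈ z, Irreducible x) ∧ z.prod = a := by
  obtain ⟨n, hn⟩ : ∃ n, deg a = n := ⟨_, rfl⟩
  induction n generalizing a with
  | zero => exact ⟨0, by simp, by simp [hd.eq_one_of_eq_zero a hn]⟩
  | succ n ih =>
    rcases Nat.eq_zero_or_pos n with rfl | hn0
    · exact ⟨{a}, by simpa using (hd.irreducible_iff).mpr hn, Multiset.prod_singleton a⟩
    obtain ⟨t, ht⟩ := hd.exists_eq_one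
    obtain ⟨b, rfl⟩ := hd.dvd_of_lt t a (by omega)
    obtain ⟨z, hz, rfl⟩ := ih b (by rw [hd.map_mul] at hn; omega)
    exact ⟨t ::ₘ z, Multiset.forall_mem_cons.mpr ⟨(hd.irreducible_iff).mpr ht, hz⟩,
      Multiset.prod_cons t z⟩

lemma lengthSet_eq_singleton (hd : IsRankOneSeminormalDegree deg) (a : M) :
    lengthSet a = {deg (Associates.mk a)} := by
  ext k
  constructor
  · rintro ⟨z, ⟨hz, hprod⟩, rfl⟩
    rw [Set.mem_singleton_iff, hd.card_eq_deg_prod hz, hprod]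
  · rintro rfl
    obtain ⟨z, hz, hprod⟩ := hd.exists_factorization (Associates.mk a)
    exact ⟨z, ⟨hz, hprod⟩, by rw [hd.card_eq_deg_prod hz, hprod]⟩

lemma exists_irreducible_mul_eq (hd : IsRankOneSeminormalDegree deg) {x y x' : Associates M}
    (hx : Irreducible x) (hy : Irreducible y) (hx' : Irreducible x') :
    ∃ c, Irreducible c ∧ x * y = x' * c := by
  rw [hd.irreducible_iff] at hx hy hx'
  obtain ⟨c, hc⟩ := hd.dvd_of_lt x' (x * y) (by rw [hd.map_mul]; omega)
  refine ⟨c, (hd.irreducible_iff).mpr ?_, hc⟩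
  have := hd.map_mul x' c
  rw [← hc, hd.map_mul] at this
  omega

lemma reflTransGen_factorizationStep [IsLeftCancelMul M] (hd : IsRankOneSeminormalDegree deg)
    {z z' : Multiset (Associates M)} (hz : ∀ x ∈ z, Irreducible x)
    (hz' : ∀ x ∈ z', Irreducible x) (hprod : z.prod = z'.prod) :
    ReflTransGen (FactorizationStep 2) z z' := by
  obtain ⟨n, hn⟩ : ∃ n, Multiset.card z = n := ⟨_, rfl⟩
  have hn' : Multiset.card z' = n := by
    rw [hd.card_eq_deg_prod hz', ← hprod, ← hd.card_eq_deg_prod hz, hn]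
  induction n generalizing z z' with
  | zero => rw [Multiset.card_eq_zero.mp hn, Multiset.card_eq_zero.mp hn']
  | succ n ih =>
    obtain ⟨x, w, rfl, hw⟩ := Multiset.card_eq_succ_iff.mp hn
    obtain ⟨x', w', rfl, hw'⟩ := Multiset.card_eq_succ_iff.mp hn'
    rw [Multiset.forall_mem_cons] at hz hz'
    cases n with
    | zero =>
      rw [Multiset.card_eq_zero.mp hw, Multiset.card_eq_zero.mp hw'] at hprod ⊢
      simp only [Multiset.prod_cons, Multiset.prod_zero, mul_one] at hprod
      rw [hprod]
    | succ m =>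
      obtain ⟨y, w₂, rfl, hw₂⟩ := Multiset.card_eq_succ_iff.mp hw
      rw [Multiset.forall_mem_cons] at hz
      obtain ⟨c, hc, hxy⟩ := hd.exists_irreducible_mul_eq hz.1 hz.2.1 hz'.1
      have hprod_xy : (x ::ₘ y ::ₘ w₂).prod = x' * (c ::ₘ w₂).prod := by
        rw [Multiset.prod_cons, Multiset.prod_cons, Multiset.prod_cons, ← mul_assoc, hxy,
          mul_assoc]
      have hstep : FactorizationStep 2 (x ::ₘ y ::ₘ w₂) (x' ::ₘ c ::ₘ w₂) :=
        ⟨Multiset.forall_mem_cons.mpr ⟨hz'.1, Multiset.forall_mem_cons.mpr ⟨hc, hz.2.2⟩⟩,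
          hprod_xy.trans (Multiset.prod_cons x' _).symm, factorDist_cons_cons_le_two x y x' c w₂⟩
      have hrest : ReflTransGen (FactorizationStep 2) (c ::ₘ w₂) w' :=
        ih (Multiset.forall_mem_cons.mpr ⟨hc, hz.2.2⟩) hz'.2
          (mul_left_cancel (hprod_xy.symm.trans (hprod.trans (Multiset.prod_cons x' w'))))
          (by rw [Multiset.card_cons, hw₂]) hw'
      exact .head hstep (hrest.lift (x' ::ₘ ·) fun _ _ h => h.cons hz'.1)

lemma catenaryDegree_le_two [IsLeftCancelMul M] (hd : IsRankOneSeminormalDegree deg) :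
    catenaryDegree M ≤ 2 :=
  catenaryDegree_le_of_reflTransGen 2 fun _ _ hz hz' hprod =>
    hd.reflTransGen_factorizationStep hz hz' hprod

end IsRankOneSeminormalDegree

section RankOne

variable {U : Type*}

def qExponent (v : U × Multiplicative (Fin 1 →₀ ℕ)) : ℕ :=
  Multiplicative.toAdd v.2 0

lemma qExponent_mul [Mul U] (v w : U × Multiplicative (Fin 1 →₀ ℕ)) :
    qExponent (v * w) = qExponent v + qExponent w :=
  rfl

lemma ext_of_qExponent_eq {v w : U × Multiplicative (Fin 1 →₀ ℕ)} (h₁ : v.1 = w.1)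
    (h₂ : qExponent v = qExponent w) : v = w :=
  Prod.ext h₁ (Multiplicative.toAdd.injective
    (Finsupp.ext fun j => by rw [Fin.fin_one_eq_zero j]; exact h₂))

lemma qExponent_eq_zero_of_isUnit [Monoid U] {D : Submonoid (U × Multiplicative (Fin 1 →₀ ℕ))}
    {x : D} (hx : IsUnit x) : qExponent (x : U × Multiplicative (Fin 1 →₀ ℕ)) = 0 := by
  obtain ⟨y, hxy⟩ := hx.exists_right_inv
  have h := congrArg (qExponent ∘ Subtype.val) hxy
  simp only [Function.comp_apply, Submonoid.coe_mul, Submonoid.coe_one, qExponent_mul] at h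
  exact Nat.eq_zero_of_add_eq_zero_right h

def assocQExponent [CommMonoid U] (D : Submonoid (U × Multiplicative (Fin 1 →₀ ℕ))) :
    Associates D → ℕ :=
  Quotient.lift (fun x : D => qExponent (x : U × Multiplicative (Fin 1 →₀ ℕ)))
    fun x _ ⟨u, hu⟩ => by
      rw [← hu, Submonoid.coe_mul, qExponent_mul, qExponent_eq_zero_of_isUnit u.isUnit, add_zero]

lemma isRankOneSeminormalDegree_assocQExponent [CommGroup U]
    (D : Submonoid (U × Multiplicative (Fin 1 →₀ ℕ)))
    (hmem : ∀ v, 1 ≤ qExponent v → v ∈ D)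
    (hunit : ∀ x : D, qExponent (x : U × Multiplicative (Fin 1 →₀ ℕ)) = 0 → IsUnit x) :
    IsRankOneSeminormalDegree (assocQExponent D) where
  map_mul a b := by
    obtain ⟨x, rfl⟩ := Associates.mk_surjective a
    obtain ⟨y, rfl⟩ := Associates.mk_surjective b
    rfl
  eq_one_of_eq_zero a h := by
    obtain ⟨x, rfl⟩ := Associates.mk_surjective a
    exact Associates.mk_eq_one.mpr (hunit x h)
  dvd_of_lt a b h := by
    obtain ⟨x, rfl⟩ := Associates.mk_surjective a
    obtain ⟨y, rfl⟩ := Associates.mk_surjective b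
    change qExponent x.val < qExponent y.val at h
    set c : U × Multiplicative (Fin 1 →₀ ℕ) := (x.val.1⁻¹ * y.val.1,
      Multiplicative.ofAdd (Finsupp.single 0 (qExponent y.val - qExponent x.val)))
    have hc : qExponent c = qExponent y.val - qExponent x.val := by
      simp [c, qExponent]
    refine Associates.mk_dvd_mk.mpr ⟨⟨c, hmem c (by omega)⟩, Subtype.ext ?_⟩
    refine ext_of_qExponent_eq (by simp [c]) ?_
    rw [Submonoid.coe_mul, qExponent_mul, hc]
    omega
  exists_eq_one := by
    set t : U × Multiplicative (Fin 1 →₀ ℕ) := (1, Multiplicative.ofAdd (Finsupp.single 0 1))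
    have ht : qExponent t = 1 := by simp [t, qExponent]
    exact ⟨Associates.mk ⟨t, hmem t ht.ge⟩, ht⟩

end RankOne

theorem rank_one_seminormal_finitely_primary_halfFactorial_general
    {U : Type*} [CommGroup U] {s : ℕ} (hs : s = 1)
    (D : Submonoid (U × Multiplicative (Fin s →₀ ℕ)))
    (hseminormal : (D : Set (U × Multiplicative (Fin s →₀ ℕ))) =
      {x : U × Multiplicative (Fin s →₀ ℕ) | ∀ j, 1 ≤ Multiplicative.toAdd x.2 j} ∪
        {x : U × Multiplicative (Fin s →₀ ℕ) | ∃ h : x ∈ D, IsUnit (⟨x, h⟩ : D)}) :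
    catenaryDegree ↥D ≤ 2 ∧ ∀ a : D, ∃ k : ℕ, lengthSet a = {k} := by
  subst hs
  have hmem : ∀ v, 1 ≤ qExponent v → v ∈ D := fun v hv =>
    (Set.ext_iff.mp hseminormal v).mpr (Or.inl (Fin.forall_fin_one.mpr hv))
  have hunit : ∀ x : D, qExponent x.val = 0 → IsUnit x := fun x hx => by
    rcases (Set.ext_iff.mp hseminormal x).mp x.2 with hpos | ⟨_, hu⟩
    · exact absurd (hpos 0) (by rw [qExponent] at hx; omega)
    · exact hu
  have hd := isRankOneSeminormalDegree_assocQExponent D hmem hunit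
  exact ⟨hd.catenaryDegree_le_two, fun a => ⟨_, hd.lengthSet_eq_singleton a⟩⟩

/-- Lemma 2.1(2): a seminormal finitely primary monoid of rank `s = 1` has catenary
degree at most `2` and is half-factorial. -/
theorem rank_one_seminormal_finitely_primary_halfFactorial
    {U : Type*} [CommGroup U] {s : ℕ} (hs : s = 1)
    (D : Submonoid (U × Multiplicative (Fin s →₀ ℕ)))
    (hprimary : ∀ x : D, ¬ IsUnit x →
      ∀ j, 1 ≤ Multiplicative.toAdd (x : U × Multiplicative (Fin s →₀ ℕ)).2 j)
    (hconductor : ∃ α : ℕ, 1 ≤ α ∧ ∀ y : U × Multiplicative (Fin s →₀ ℕ),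
      ((1 : U), Multiplicative.ofAdd (allOnes s)) ^ α * y ∈ D)
    (hseminormal : (D : Set (U × Multiplicative (Fin s →₀ ℕ))) =
      {x : U × Multiplicative (Fin s →₀ ℕ) | ∀ j, 1 ≤ Multiplicative.toAdd x.2 j} ∪
        {x : U × Multiplicative (Fin s →₀ ℕ) | ∃ h : x ∈ D, IsUnit (⟨x, h⟩ : D)}) :
    catenaryDegree ↥D ≤ 2 ∧ ∀ a : D, ∃ k : ℕ, lengthSet a = {k} :=
  rank_one_seminormal_finitely_primary_halfFactorial_general hs D hseminormal

end
end ArXivSeminormal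
end

section
/- Let G be a finite abelian group with |G| ≥ 3. Then Δ(G) is a finite nonempty interval of integers with min Δ(G) = 1, i.e. Δ(G) = [1, max Δ(G)]. -/
namespace ArXivSeminormal

attribute [local instance] Classical.propDecidable

noncomputable section

/-! ### Generic factorization theory in commutative monoids -/

variable {M : Type*} [CommMonoid M]

/-!
Since `B(G)` is reduced, a factorization of a zero-sum sequence `A` amounts to a multiset of
minimal zero-sum sequences adding up to `A`.

* Every gap in `L(A)` is at most `|G|² + 1`: an atom `U` of one factorization is covered by at
  most `|U| ≤ |G|` atoms of any other factorization, and exchanging them moves the length by at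
  most `|G|² + 1`; by induction on `|A|`, such steps cross every threshold between two lengths.
* `1 ∈ Δ(G)`: for nonzero `a, b, c` with `a + b + c = 0`, which exist as `|G| ≥ 3`, the sequence
  `abc · (-a)(-b)(-c) = (a(-a)) (b(-b)) (c(-c))` has exactly the lengths `2` and `3`.
* `Δ(G)` is an interval: let `k < l` be adjacent lengths of `A` and `1 ≤ e < l - k`. Merging two
  terms `h₁, h₂` of an atom of length `≥ 2` in a factorization of length `k` gives a shorter
  sequence `A'` with `k ∈ L(A')`. Each length `m` of `A'` yields `m` or `m + 1` in `L(A)`, so the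
  next length of `A'` after `k` is at least `l - 1 ≥ k + e`: it is `k + e`, or induction on `|A|`
  applies.
-/

open Multiset

theorem eq_Icc_one_sSup_of_lt_mem {S : Set ℕ} (hS : S.Finite) (hone : 1 ∈ S)
    (hpos : ∀ d ∈ S, 1 ≤ d) (hdown : ∀ d ∈ S, ∀ e, 1 ≤ e → e < d → e ∈ S) :
    S = Set.Icc 1 (sSup S) := by
  ext e
  refine ⟨fun he => ⟨hpos e he, le_csSup hS.bddAbove he⟩, fun ⟨he, hes⟩ => ?_⟩
  have hmax : sSup S ∈ S := Set.Nonempty.csSup_mem ⟨1, hone⟩ hS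
  rcases hes.eq_or_lt with rfl | hlt
  · exact hmax
  · exact hdown _ hmax e he hlt

theorem exists_next_mem {L : Set ℕ} {k m : ℕ} (hm : m ∈ L) (hkm : k < m) :
    ∃ l ∈ L, k < l ∧ ∀ n, k < n → n < l → n ∉ L := by
  have h : ∃ l, l ∈ L ∧ k < l := ⟨m, hm, hkm⟩
  exact ⟨Nat.find h, (Nat.find_spec h).1, (Nat.find_spec h).2,
    fun n hkn hn hnL => Nat.find_min h hn ⟨hnL, hkn⟩⟩

section MultisetCover

variable {α : Type*}

theorem exists_le_card_le_of_le_sum {s : Multiset α} {z : Multiset (Multiset α)}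
    (h : s ≤ z.sum) : ∃ y ≤ z, s ≤ y.sum ∧ card y ≤ card s := by
  induction z using Multiset.induction_on generalizing s with
  | empty => exact ⟨0, le_rfl, by simpa using h, by simp⟩
  | cons P z ih =>
    obtain ⟨y, hyz, hy, hcard⟩ := ih (tsub_le_iff_left.2 (by simpa using h))
    by_cases hP : s - P = s
    · exact ⟨y, hyz.trans (le_cons_self _ _), hP ▸ hy, hP ▸ hcard⟩
    · have hlt : card (s - P) < card s := card_lt_card (lt_of_le_of_ne tsub_le_self hP)
      refine ⟨P ::ₘ y, cons_le_cons _ hyz, ?_, ?_⟩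
      · simpa using tsub_le_iff_left.1 hy
      · simp only [card_cons]; omega

theorem sum_tsub_le_of_sum_eq {s t : Multiset α} {y z : Multiset (Multiset α)}
    (hz : z.sum = s + t) (hyz : y ≤ z) (hy : s ≤ y.sum) : (z - y).sum ≤ t := by
  refine le_of_add_le_add_left (a := s) ?_
  calc s + (z - y).sum ≤ y.sum + (z - y).sum := by gcongr
    _ = s + t := by rw [← sum_add, add_tsub_cancel_of_le hyz, hz]

theorem card_sum_le_card_mul {z : Multiset (Multiset α)} {D : ℕ} (hD : ∀ u ∈ z, card u ≤ D) :
    card z.sum ≤ card z * D := by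
  rw [← join, card_join]
  simpa using sum_le_card_nsmul (map card z) D fun n hn => by
    obtain ⟨u, hu, rfl⟩ := mem_map.1 hn
    exact hD u hu

end MultisetCover

section ZeroSumSequences

variable {G : Type*} [AddCommGroup G]

def IsMinimalZeroSum (u : Multiset G) : Prop :=
  u ≠ 0 ∧ u.sum = 0 ∧ ∀ t ≤ u, t ≠ 0 → t.sum = 0 → t = u

def IsFactorization (A : Multiset G) (z : Multiset (Multiset G)) : Prop :=
  (∀ u ∈ z, IsMinimalZeroSum u) ∧ z.sum = A

def seqLengths (A : Multiset G) : Set ℕ :=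
  {k | ∃ z, IsFactorization A z ∧ card z = k}

theorem IsMinimalZeroSum.eq_zero_of_le_of_sum_eq_zero {x : G} {Y t : Multiset G}
    (hu : IsMinimalZeroSum (x ::ₘ Y)) (htY : t ≤ Y) (ht : t.sum = 0) : t = 0 := by
  by_contra ht0
  have := card_le_card htY
  rw [hu.2.2 t (htY.trans (le_cons_self _ _)) ht0 ht, card_cons] at this
  omega

theorem IsMinimalZeroSum.merge {h₁ h₂ : G} {B : Multiset G}
    (hu : IsMinimalZeroSum (h₁ ::ₘ h₂ ::ₘ B)) : IsMinimalZeroSum ((h₁ + h₂) ::ₘ B) := by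
  refine ⟨cons_ne_zero, by simpa [add_assoc] using hu.2.1, fun t ht ht0 hts => ?_⟩
  by_cases hmem : h₁ + h₂ ∈ t
  · obtain ⟨t₀, rfl⟩ := exists_cons_of_mem hmem
    have ht₀ : t₀ ≤ B := (cons_le_cons_iff _).1 ht
    have := hu.2.2 (h₁ ::ₘ h₂ ::ₘ t₀) (cons_le_cons _ (cons_le_cons _ ht₀)) cons_ne_zero
      (by simpa [add_assoc] using hts)
    rw [(cons_inj_right _).1 ((cons_inj_right _).1 this)]
  · exact absurd (hu.eq_zero_of_le_of_sum_eq_zero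
      (((le_cons_of_notMem hmem).1 ht).trans (le_cons_self _ _)) hts) ht0

namespace IsFactorization

variable {A B : Multiset G} {z w : Multiset (Multiset G)}

theorem single {u : Multiset G} (hu : IsMinimalZeroSum u) : IsFactorization u {u} :=
  ⟨by simpa using hu, by simp⟩

theorem add (hz : IsFactorization A z) (hw : IsFactorization B w) :
    IsFactorization (A + B) (z + w) :=
  ⟨fun u hu => (mem_add.1 hu).elim (hz.1 u) (hw.1 u), by rw [sum_add, hz.2, hw.2]⟩

theorem of_le (hz : IsFactorization A z) (hwz : w ≤ z) : IsFactorization w.sum w :=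
  ⟨fun u hu => hz.1 u (mem_of_le hwz hu), rfl⟩

theorem sum_eq_zero (hz : IsFactorization A z) : A.sum = 0 := by
  rw [← hz.2, ← join, sum_join]
  exact Multiset.sum_eq_zero fun x hx => by
    obtain ⟨u, hu, rfl⟩ := mem_map.1 hx
    exact (hz.1 u hu).2.1

theorem card_le (hz : IsFactorization A z) : card z ≤ card A := by
  rw [← hz.2, ← join, card_join]
  calc card z = card (map card z) • 1 := by simp
    _ ≤ (map card z).sum := card_nsmul_le_sum fun n hn => by
      obtain ⟨u, hu, rfl⟩ := mem_map.1 hn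
      exact card_pos.2 (hz.1 u hu).1

end IsFactorization

theorem exists_isFactorization {A : Multiset G} (hA : A.sum = 0) : ∃ z, IsFactorization A z := by
  induction hn : card A using Nat.strong_induction_on generalizing A with
  | _ n ih =>
  by_cases h0 : A = 0
  · exact ⟨0, by simp [IsFactorization, h0]⟩
  by_cases hmin : IsMinimalZeroSum A
  · exact ⟨{A}, .single hmin⟩
  obtain ⟨t, htA, ht0, hts, htA'⟩ : ∃ t ≤ A, t ≠ 0 ∧ t.sum = 0 ∧ t ≠ A := by
    simpa [IsMinimalZeroSum, h0, hA] using hmin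
  have hsplit : t + (A - t) = A := add_tsub_cancel_of_le htA
  have hrest : (A - t).sum = 0 := by
    rwa [← hsplit, sum_add, hts, zero_add] at hA
  have hcard := congrArg card hsplit
  rw [card_add] at hcard
  have ht_pos := card_pos.2 ht0
  have hrest_pos : 0 < card (A - t) := card_pos.2 fun h => htA' (by simpa [h] using hsplit)
  obtain ⟨z₁, hz₁⟩ := ih _ (by omega) hts rfl
  obtain ⟨z₂, hz₂⟩ := ih _ (by omega) hrest rfl
  exact ⟨z₁ + z₂, hsplit ▸ hz₁.add hz₂⟩

theorem IsFactorization.card_le_two_of_merge {h₁ h₂ : G} {Y : Multiset G}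
    {z : Multiset (Multiset G)} (hu : IsMinimalZeroSum ((h₁ + h₂) ::ₘ Y))
    (hz : IsFactorization (h₁ ::ₘ h₂ ::ₘ Y) z) : card z ≤ 2 := by
  by_contra! hcard
  have hs : {h₁, h₂} ≤ z.sum := by rw [hz.2]; exact cons_le_cons _ (cons_le_cons _ (zero_le _))
  obtain ⟨y, hyz, hy, hycard⟩ := exists_le_card_le_of_le_sum hs
  have hrest : (z - y).sum ≤ Y := sum_tsub_le_of_sum_eq (by simp [hz.2]) hyz hy
  obtain ⟨R, hR⟩ : ∃ R, R ∈ z - y := exists_mem_of_ne_zero fun h => by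
    have := card_le_card (tsub_eq_zero_iff_le.1 h)
    rw [card_pair] at hycard
    omega
  have hRz : R ∈ z := mem_of_le tsub_le_self hR
  exact (hz.1 R hRz).1 (hu.eq_zero_of_le_of_sum_eq_zero
    ((le_sum_of_mem hR).trans hrest) (hz.1 R hRz).2.1)

theorem mem_seqLengths_or_succ_of_merge {h₁ h₂ : G} {B : Multiset G} {m : ℕ}
    (hm : m ∈ seqLengths ((h₁ + h₂) ::ₘ B)) :
    m ∈ seqLengths (h₁ ::ₘ h₂ ::ₘ B) ∨ m + 1 ∈ seqLengths (h₁ ::ₘ h₂ ::ₘ B) := by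
  obtain ⟨z, hz, rfl⟩ := hm
  obtain ⟨P, hPz, hP⟩ := mem_join.1 (hz.2 ▸ mem_cons_self _ _ : h₁ + h₂ ∈ z.sum)
  obtain ⟨w, rfl⟩ := exists_cons_of_mem hPz
  obtain ⟨Y, rfl⟩ := exists_cons_of_mem hP
  have hP := hz.1 _ (mem_cons_self _ _)
  have hB : B = Y + w.sum := by
    simpa using hz.2.symm
  obtain ⟨z₀, hz₀⟩ := exists_isFactorization (A := h₁ ::ₘ h₂ ::ₘ Y)
    (by simpa [add_assoc] using hP.2.1)
  have hz₀_pos : 0 < card z₀ := card_pos.2 fun h => by simpa [h] using hz₀.2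
  have hz₀_le := hz₀.card_le_two_of_merge hP
  have hfact : IsFactorization (h₁ ::ₘ h₂ ::ₘ B) (z₀ + w) := by
    simpa [hB] using hz₀.add (hz.of_le (le_cons_self w _))
  rcases (by omega : card z₀ = 1 ∨ card z₀ = 2) with h | h
  · exact .inl ⟨_, hfact, by simp only [card_add, card_cons, h]; omega⟩
  · exact .inr ⟨_, hfact, by simp only [card_add, card_cons, h]; omega⟩

theorem exists_mem_seqLengths_merge {h₁ h₂ : G} {B : Multiset G} {l : ℕ}
    (hl : l ∈ seqLengths (h₁ ::ₘ h₂ ::ₘ B)) :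
    ∃ m ∈ seqLengths ((h₁ + h₂) ::ₘ B), l ≤ m + 1 := by
  obtain ⟨z, hz, rfl⟩ := hl
  have hs : {h₁, h₂} ≤ z.sum := by simp [hz.2]
  obtain ⟨y, hyz, hy, hycard⟩ := exists_le_card_le_of_le_sum hs
  obtain ⟨C, hC⟩ := Multiset.le_iff_exists_add.1 hy
  have hCsum : ((h₁ + h₂) ::ₘ C).sum = 0 := by
    simpa [hC, add_assoc] using (hz.of_le hyz).sum_eq_zero
  obtain ⟨z₀, hz₀⟩ := exists_isFactorization hCsum
  have hz₀_pos : 0 < card z₀ := card_pos.2 fun h => by simpa [h] using hz₀.2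
  have hB : B = C + (z - y).sum := by
    have := hz.2
    rw [← add_tsub_cancel_of_le hyz, sum_add, hC] at this
    simpa using this.symm
  refine ⟨_, ⟨z₀ + (z - y), by simpa [hB] using hz₀.add (hz.of_le tsub_le_self), rfl⟩, ?_⟩
  have := card_le_card hyz
  simp only [card_add, card_sub hyz]
  rw [card_pair] at hycard
  omega

theorem exists_shorter_of_gap {A : Multiset G} {k l : ℕ} (hk : k ∈ seqLengths A)
    (hl : l ∈ seqLengths A) (hkl : k < l) (hgap : ∀ m, k < m → m < l → m ∉ seqLengths A) :
    ∃ A' : Multiset G, card A' < card A ∧ k ∈ seqLengths A' ∧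
      (∃ m ∈ seqLengths A', l ≤ m + 1) ∧ ∀ m ∈ seqLengths A', k < m → l ≤ m + 1 := by
  obtain ⟨z', hz', rfl⟩ := hk
  obtain ⟨U, hUz', hU⟩ : ∃ U ∈ z', 2 ≤ card U := by
    by_contra! h
    obtain ⟨z, hz, rfl⟩ := hl
    have := card_sum_le_card_mul fun u hu => Nat.le_of_lt_succ (h u hu)
    rw [hz'.2, mul_one] at this
    have := hz.card_le
    omega
  obtain ⟨w, rfl⟩ := exists_cons_of_mem hUz'
  obtain ⟨h₁, U₁, rfl⟩ : ∃ h₁ U₁, U = h₁ ::ₘ U₁ :=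
    (card_pos_iff_exists_mem.1 (by omega)).imp fun _ => exists_cons_of_mem
  obtain ⟨h₂, U₀, rfl⟩ : ∃ h₂ U₀, U₁ = h₂ ::ₘ U₀ :=
    (card_pos_iff_exists_mem.1 (by rw [card_cons] at hU; omega)).imp fun _ => exists_cons_of_mem
  have hA : A = h₁ ::ₘ h₂ ::ₘ (U₀ + w.sum) := by simp [← hz'.2]
  subst hA
  refine ⟨(h₁ + h₂) ::ₘ (U₀ + w.sum), by simp, ?_, ?_, ?_⟩
  · refine ⟨((h₁ + h₂) ::ₘ U₀) ::ₘ w, ?_, by simp⟩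
    simpa using (IsFactorization.single (hz'.1 _ (mem_cons_self _ _)).merge).add
      (hz'.of_le (le_cons_self w _))
  · exact exists_mem_seqLengths_merge hl
  · intro m hm hkm
    by_contra! hml
    rcases mem_seqLengths_or_succ_of_merge hm with h | h
    · exact hgap m hkm (by omega) h
    · exact hgap (m + 1) (by omega) (by omega) h

theorem exists_mem_deltaSet_of_lt_gap {A : Multiset G} {k l e : ℕ} (hk : k ∈ seqLengths A)
    (hl : l ∈ seqLengths A) (hgap : ∀ m, k < m → m < l → m ∉ seqLengths A) (he : 1 ≤ e)
    (hel : k + e < l) : ∃ A' : Multiset G, e ∈ DeltaSet (seqLengths A') := by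
  induction hn : card A using Nat.strong_induction_on generalizing A l with
  | _ n ih =>
  obtain ⟨A', hA', hk', ⟨m, hm, hlm⟩, habove⟩ := exists_shorter_of_gap hk hl (by omega) hgap
  obtain ⟨l', hl', hkl', hgap'⟩ := exists_next_mem hm (by omega : k < m)
  have hl'_ge := habove l' hl' hkl'
  rcases (by omega : k + e = l' ∨ k + e < l') with h | h
  · exact ⟨A', k, l', hk', hl', hkl', hgap', by omega⟩
  · exact ih _ (hn ▸ hA') hk' hl' hgap' h rfl

theorem exists_factorization_cons_card_le {D : ℕ}
    (hD : ∀ u : Multiset G, IsMinimalZeroSum u → card u ≤ D) {A U : Multiset G}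
    {z' : Multiset (Multiset G)} (hU : IsMinimalZeroSum U) (hUA : U ≤ A)
    (hz' : IsFactorization A z') :
    ∃ z₁, IsFactorization A (U ::ₘ z₁) ∧ card z₁ ≤ card z' + D * D := by
  obtain ⟨y, hyz, hy, hycard⟩ := exists_le_card_le_of_le_sum (hz'.2 ▸ hUA)
  obtain ⟨C, hC⟩ := Multiset.le_iff_exists_add.1 hy
  have hy' := hz'.of_le hyz
  have hCsum : C.sum = 0 := by simpa [hC, hU.2.1] using hy'.sum_eq_zero
  obtain ⟨zC, hzC⟩ := exists_isFactorization hCsum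
  refine ⟨zC + (z' - y), ?_, ?_⟩
  · have := ((IsFactorization.single hU).add hzC).add (hz'.of_le (tsub_le_self (b := y)))
    rw [← hC, ← sum_add, add_tsub_cancel_of_le hyz, hz'.2] at this
    simpa using this
  · have hCy : card C ≤ card y * D := by
      have := card_sum_le_card_mul fun u hu => hD u (hy'.1 u hu)
      rw [hC, card_add] at this
      omega
    have := hzC.card_le
    have := card_le_card (tsub_le_self (a := z') (b := y))
    have : card y * D ≤ D * D := Nat.mul_le_mul_right D (hycard.trans (hD U hU))
    simp only [card_add]
    omega

theorem exists_mem_seqLengths_Ioc {D : ℕ}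
    (hD : ∀ u : Multiset G, IsMinimalZeroSum u → card u ≤ D) {A : Multiset G}
    {z z' : Multiset (Multiset G)} (hz : IsFactorization A z) (hz' : IsFactorization A z')
    {t : ℕ} (ht' : card z' ≤ t) (ht : t < card z) :
    ∃ m ∈ seqLengths A, t < m ∧ m ≤ t + (D * D + 1) := by
  induction hn : card A using Nat.strong_induction_on generalizing A z z' t with
  | _ n ih =>
  obtain ⟨U, z₀, rfl⟩ : ∃ U z₀, z = U ::ₘ z₀ :=
    (card_pos_iff_exists_mem.1 (by omega)).imp fun _ => exists_cons_of_mem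
  have hU := hz.1 U (mem_cons_self _ _)
  have hA : A = U + z₀.sum := by simp [← hz.2]
  obtain ⟨z₁, hz₁, hz₁card⟩ :=
    exists_factorization_cons_card_le hD hU (hA ▸ le_add_right le_rfl) hz'
  by_cases hjump : t < card z₁ + 1
  · exact ⟨_, ⟨_, hz₁, rfl⟩, by simpa using hjump, by rw [card_cons]; omega⟩
  -- otherwise both factorizations share `U`, and we recurse on the rest of `A`
  have hz₁' : IsFactorization z₀.sum z₁ :=
    ⟨fun u hu => hz₁.1 u (mem_cons_of_mem hu), by simpa [hA] using hz₁.2⟩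
  have hUpos := card_pos.2 hU.1
  obtain ⟨m, ⟨w, hw, rfl⟩, hm⟩ := ih (card z₀.sum) (by rw [← hn, hA, card_add]; omega)
    (hz.of_le (le_cons_self _ _)) hz₁' (t := t - 1) (by omega) (by rw [card_cons] at ht; omega) rfl
  exact ⟨card w + 1, ⟨U ::ₘ w, by simpa [hA] using (IsFactorization.single hU).add hw,
    by simp⟩, by omega⟩

theorem IsMinimalZeroSum.card_le_fintype_card [Fintype G] {u : Multiset G}
    (hu : IsMinimalZeroSum u) : card u ≤ Fintype.card G := by
  by_contra! hlt
  set l := u.toList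
  have hl : card u = l.length := by rw [← coe_card, coe_toList]
  obtain ⟨⟨i, hi⟩, ⟨j, hj⟩, hij, hsum⟩ := Fintype.exists_ne_map_eq_of_card_lt
    (fun i : Fin l.length => (l.take i).sum) (by simpa [← hl] using hlt)
  wlog hij' : i < j generalizing i j
  · exact this j hj i hi (Ne.symm hij) hsum.symm (by simp only [ne_eq, Fin.ext_iff] at hij; omega)
  set t := (l.drop i).take (j - i)
  have htake : l.take j = l.take i ++ t := by rw [← List.take_add]; congr; omega
  have ht : t.sum = 0 := by simpa [htake] using hsum
  have htl : t.length = j - i := by simp only [t, List.length_take, List.length_drop]; omega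
  have htu : (t : Multiset G) ≤ u := by
    rw [← coe_toList u]
    exact coe_le.2 ((List.take_sublist _ _).trans (List.drop_sublist _ _)).subperm
  have ht0 : (t : Multiset G) ≠ 0 := by
    simp only [ne_eq, coe_eq_zero, ← List.length_eq_zero_iff, htl]; omega
  have := hu.2.2 t htu ht0 (by simpa using ht)
  have := congrArg card this
  simp only [coe_card, htl] at this
  omega

theorem deltaSet_seqLengths_subset_Icc [Fintype G] (A : Multiset G) :
    DeltaSet (seqLengths A) ⊆ Set.Icc 1 (Fintype.card G * Fintype.card G + 1) := by
  rintro _ ⟨k, l, ⟨z', hz', rfl⟩, ⟨z, hz, rfl⟩, hkl, hgap, rfl⟩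
  obtain ⟨m, hm, hkm, hmk⟩ :=
    exists_mem_seqLengths_Ioc (fun _ => IsMinimalZeroSum.card_le_fintype_card) hz hz' le_rfl hkl
  have : card z ≤ m := by
    by_contra!
    exact hgap m hkm this hm
  exact ⟨by omega, by omega⟩

theorem isMinimalZeroSum_pair {x : G} (hx : x ≠ 0) : IsMinimalZeroSum {x, -x} := by
  refine ⟨by simp, by simp, fun t ht ht0 hts => ?_⟩
  rw [← mem_powerset] at ht
  simp only [insert_eq_cons, powerset_cons, mem_add, mem_powerset, le_singleton, mem_map,
    exists_eq_or_imp, cons_zero, existsAndEq, true_and] at ht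
  rcases ht with (rfl | rfl) | rfl | rfl <;> simp_all

theorem isMinimalZeroSum_triple {a b c : G} (ha : a ≠ 0) (hb : b ≠ 0) (hc : c ≠ 0)
    (habc : a + b + c = 0) : IsMinimalZeroSum {a, b, c} := by
  have hab : a + b ≠ 0 := fun h => hc (by rwa [h, zero_add] at habc)
  have hac : a + c ≠ 0 := fun h => hb (by rwa [add_right_comm, h, zero_add] at habc)
  have hbc : b + c ≠ 0 := fun h => ha (by rwa [add_assoc, h, add_zero] at habc)
  refine ⟨by simp, by simpa [add_assoc] using habc, fun t ht ht0 hts => ?_⟩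
  rw [← mem_powerset] at ht
  simp only [insert_eq_cons, powerset_cons, Multiset.map_add, map_map, Function.comp_apply,
    mem_add, mem_powerset, le_singleton, mem_map, exists_eq_or_imp, cons_zero, existsAndEq,
    true_and] at ht
  rcases ht with ((rfl | rfl) | rfl | rfl) | (rfl | rfl) | rfl | rfl <;> simp_all

theorem one_mem_deltaSet_seqLengths {a b c : G} (ha : a ≠ 0) (hb : b ≠ 0) (hc : c ≠ 0)
    (habc : a + b + c = 0) : 1 ∈ DeltaSet (seqLengths ({a, b, c} + {-a, -b, -c})) := by
  have hneg : -a + -b + -c = 0 := by rw [← neg_add, ← neg_add, habc, neg_zero]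
  refine ⟨2, 3, ⟨{{a, b, c}, {-a, -b, -c}}, ⟨?_, by simp⟩, rfl⟩,
    ⟨{{a, -a}, {b, -b}, {c, -c}}, ⟨?_, ?_⟩, rfl⟩, by omega, by omega, rfl⟩
  · simp only [insert_eq_cons, mem_cons, mem_singleton]
    rintro u (rfl | rfl)
    · exact isMinimalZeroSum_triple ha hb hc habc
    · exact isMinimalZeroSum_triple (neg_ne_zero.2 ha) (neg_ne_zero.2 hb) (neg_ne_zero.2 hc) hneg
  · simp only [insert_eq_cons, mem_cons, mem_singleton]
    rintro u (rfl | rfl | rfl) <;> exact isMinimalZeroSum_pair ‹_›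
  · simp [cons_swap]

theorem exists_zero_sum_triple [Fintype G] (hG : 3 ≤ Fintype.card G) :
    ∃ a b c : G, a ≠ 0 ∧ b ≠ 0 ∧ c ≠ 0 ∧ a + b + c = 0 := by
  obtain ⟨a, ha⟩ := Fintype.exists_ne_of_one_lt_card (by omega) (0 : G)
  obtain ⟨b, -, hb⟩ := Finset.exists_mem_notMem_of_card_lt_card
    (s := {0, -a}) (t := Finset.univ) ((Finset.card_le_two).trans_lt hG)
  simp only [Finset.mem_insert, Finset.mem_singleton, not_or] at hb
  refine ⟨a, b, -(a + b), ha, hb.1, ?_, by abel⟩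
  rw [neg_ne_zero]
  exact fun h => hb.2 (eq_neg_of_add_eq_zero_right h)

end ZeroSumSequences

theorem lengthSet_eq_of_subsingleton_units [Subsingleton Mˣ] (a : M) :
    lengthSet a = {k | ∃ w : Multiset M, (∀ x ∈ w, Irreducible x) ∧ w.prod = a ∧ card w = k} := by
  let e : M ≃* Associates M :=
    MulEquiv.ofBijective Associates.mkMonoidHom ⟨Associates.mk_injective, Associates.mk_surjective⟩
  have he : ∀ x, e x = Associates.mk x := fun _ => rfl
  ext k
  constructor
  · rintro ⟨z, ⟨hirr, hprod⟩, rfl⟩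
    refine ⟨z.map e.symm, fun x hx => ?_, e.injective ?_, card_map _ _⟩
    · obtain ⟨y, hy, rfl⟩ := mem_map.1 hx
      exact (MulEquiv.irreducible_iff e).1 (by simpa using hirr y hy)
    · rw [map_multiset_prod, map_map, he]
      simpa [Function.comp_def] using hprod
  · rintro ⟨w, hirr, rfl, rfl⟩
    refine ⟨w.map Associates.mk, ⟨fun x hx => ?_, Associates.prod_mk⟩, card_map _ _⟩
    obtain ⟨y, hy, rfl⟩ := mem_map.1 hx
    exact (MulEquiv.irreducible_iff e).2 (hirr y hy)

section BlockMonoid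

variable {G : Type*} [AddCommGroup G]

def toSeq (b : BlockMonoid G) : Multiset G := Multiplicative.toAdd (b : FreeCM G)

theorem mem_blockMonoid_iff {x : FreeCM G} :
    x ∈ BlockMonoid G ↔ (Multiplicative.toAdd x).sum = 0 := by
  rw [BlockMonoid, MonoidHom.mem_mker, ← ofAdd_zero, ← Multiplicative.toAdd.injective.eq_iff]
  rfl

theorem sum_toSeq (b : BlockMonoid G) : (toSeq b).sum = 0 := mem_blockMonoid_iff.1 b.2

theorem toSeq_injective : Function.Injective (toSeq (G := G)) :=
  fun _ _ h => Subtype.ext (Multiplicative.toAdd.injective h)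

@[simp]
theorem toSeq_mul (b c : BlockMonoid G) : toSeq (b * c) = toSeq b + toSeq c := rfl

@[simp]
theorem toSeq_eq_zero {b : BlockMonoid G} : toSeq b = 0 ↔ b = 1 :=
  toSeq_injective.eq_iff' rfl

theorem toSeq_prod (w : Multiset (BlockMonoid G)) : toSeq w.prod = (w.map toSeq).sum := by
  simp only [toSeq, Submonoid.coe_multiset_prod, toAdd_multiset_sum, map_map]
  rfl

instance : CanLift (Multiset G) (BlockMonoid G) toSeq (fun u => u.sum = 0) where
  prf u hu := ⟨⟨Multiplicative.ofAdd u, mem_blockMonoid_iff.2 hu⟩, rfl⟩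

instance : Subsingleton (BlockMonoid G)ˣ := by
  have key (u : (BlockMonoid G)ˣ) : u = 1 := Units.ext <| toSeq_eq_zero.1 <|
    (add_eq_zero.1 (by rw [← toSeq_mul, u.mul_inv, toSeq_eq_zero])).1
  exact ⟨fun u v => (key u).trans (key v).symm⟩

theorem irreducible_iff_isMinimalZeroSum {b : BlockMonoid G} :
    Irreducible b ↔ IsMinimalZeroSum (toSeq b) := by
  simp only [irreducible_iff, isUnit_iff_eq_one, ← toSeq_eq_zero]
  constructor
  · rintro ⟨hb, hsplit⟩
    refine ⟨hb, sum_toSeq b, fun t ht ht0 hts => ?_⟩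
    obtain ⟨r, hr⟩ := Multiset.le_iff_exists_add.1 ht
    have hrs : r.sum = 0 := by simpa [hr, hts] using sum_toSeq b
    lift t to BlockMonoid G using hts
    lift r to BlockMonoid G using hrs
    rcases hsplit (toSeq_injective (hr.trans (toSeq_mul _ _).symm)) with h | h
    · exact absurd h ht0
    · simpa [h] using hr.symm
  · rintro ⟨hb, -, hmin⟩
    refine ⟨hb, fun x y hxy => ?_⟩
    rw [← toSeq_injective.eq_iff, toSeq_mul] at hxy
    by_cases hx : toSeq x = 0
    · exact .inl hx
    · right
      have := hmin (toSeq x) (hxy ▸ le_add_right le_rfl) hx (sum_toSeq x)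
      rw [hxy] at this
      simpa using this.symm

theorem lengthSet_blockMonoid (b : BlockMonoid G) : lengthSet b = seqLengths (toSeq b) := by
  rw [lengthSet_eq_of_subsingleton_units]
  ext k
  constructor
  · rintro ⟨w, hirr, rfl, rfl⟩
    refine ⟨w.map toSeq, ⟨fun u hu => ?_, (toSeq_prod w).symm⟩, card_map _ _⟩
    obtain ⟨x, hx, rfl⟩ := mem_map.1 hu
    exact irreducible_iff_isMinimalZeroSum.1 (hirr x hx)
  · rintro ⟨v, hv, rfl⟩
    lift v to Multiset (BlockMonoid G) using fun u hu => (hv.1 u hu).2.1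
    refine ⟨v, fun x hx => ?_, toSeq_injective (by rw [toSeq_prod, hv.2]), (card_map _ _).symm⟩
    exact irreducible_iff_isMinimalZeroSum.2 (hv.1 _ (mem_map_of_mem _ hx))

theorem deltaMonoid_blockMonoid :
    DeltaMonoid (BlockMonoid G) = ⋃ A : Multiset G, DeltaSet (seqLengths A) := by
  ext d
  simp only [DeltaMonoid, Set.mem_iUnion, lengthSet_blockMonoid]
  refine ⟨fun ⟨b, hb⟩ => ⟨_, hb⟩, fun ⟨A, hA⟩ => ?_⟩
  have hA0 : A.sum = 0 := by
    obtain ⟨k, -, ⟨z, hz, -⟩, -⟩ := hA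
    exact hz.sum_eq_zero
  lift A to BlockMonoid G using hA0
  exact ⟨A, hA⟩

end BlockMonoid

/-- Proposition 2.3: for a finite abelian group `G` with `|G| ≥ 3`, the set of
distances `Δ(G)` of the monoid of zero-sum sequences over `G` is a finite nonempty
interval with minimum `1`, i.e. `Δ(G) = [1, max Δ(G)]`. -/
theorem deltaSet_of_finite_abelian_group_is_interval
    {G : Type*} [AddCommGroup G] [Fintype G] (hG : 3 ≤ Fintype.card G) :
    (DeltaMonoid ↥(BlockMonoid G)).Finite ∧
    (DeltaMonoid ↥(BlockMonoid G)).Nonempty ∧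
    DeltaMonoid ↥(BlockMonoid G) = Set.Icc 1 (sSup (DeltaMonoid ↥(BlockMonoid G))) := by
  rw [deltaMonoid_blockMonoid]
  have hbound : ⋃ A : Multiset G, DeltaSet (seqLengths A) ⊆
      Set.Icc 1 (Fintype.card G * Fintype.card G + 1) :=
    Set.iUnion_subset deltaSet_seqLengths_subset_Icc
  have hfin := (Set.finite_Icc _ _).subset hbound
  have hone : 1 ∈ ⋃ A : Multiset G, DeltaSet (seqLengths A) := by
    obtain ⟨a, b, c, ha, hb, hc, habc⟩ := exists_zero_sum_triple hG
    exact Set.mem_iUnion.2 ⟨_, one_mem_deltaSet_seqLengths ha hb hc habc⟩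
  refine ⟨hfin, ⟨1, hone⟩, eq_Icc_one_sSup_of_lt_mem hfin hone (fun d hd => (hbound hd).1) ?_⟩
  simp only [Set.mem_iUnion]
  rintro d ⟨A, k, l, hk, hl, -, hgap, rfl⟩ e he hel
  exact exists_mem_deltaSet_of_lt_gap hk hl hgap he (by omega)

end
end ArXivSeminormal
end

section
/- Assume Setting (S). Let A ∈ B be an atom of B and let q be an atom of T with q | A in F, and set g = [q] ∈ G. Then the element g·q^{−1}·A of F (obtained from A by removing the factor q from its T-component and appending the letter g to its F(G)-component) lies in B and is an atom of B. -/
namespace ArXivSeminormal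

attribute [local instance] Classical.propDecidable

noncomputable section

/-! ### Generic factorization theory in commutative monoids -/

variable {M : Type*} [CommMonoid M]

/- A factorization `p * C = X * Y` with `p ∣ X` lifts, after exchanging `p` back for `q` in `X`,
to a factorization of the atom `q * C`; the factor containing `q` cannot be a unit. -/
theorem exists_irreducible_mker_of_exchange {F K : Type*} [CommMonoid F] [IsLeftCancelMul F]
    [Monoid K]
    {φ : F →* K} {p q C : F} (hφ : φ p = φ q) (hp : ¬IsUnit p)
    (hp_dvd : ∀ x y, p ∣ x * y → p ∣ x ∨ p ∣ y) (hq : ¬IsUnit q)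
    (A : MonoidHom.mker φ) (hA : Irreducible A) (hAC : (A : F) = q * C) :
    ∃ h : p * C ∈ MonoidHom.mker φ, Irreducible (⟨p * C, h⟩ : MonoidHom.mker φ) := by
  have map_exchange : ∀ x, φ (p * x) = φ (q * x) := fun x => by rw [map_mul, map_mul, hφ]
  have hpC : p * C ∈ MonoidHom.mker φ := by
    rw [MonoidHom.mem_mker, map_exchange, ← hAC]
    exact A.2
  have not_isUnit_of_val : ∀ {a x : F} (h : a * x ∈ MonoidHom.mker φ), ¬IsUnit a →
      ¬IsUnit (⟨a * x, h⟩ : MonoidHom.mker φ) := fun _ ha hu =>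
    ha (isUnit_of_mul_isUnit_left (hu.map (MonoidHom.mker φ).subtype))
  have unit_of_dvd : ∀ X Y : MonoidHom.mker φ, p * C = X * Y → p ∣ (X : F) → IsUnit Y := by
    rintro X Y hXY ⟨X₀, hX₀⟩
    have hC : C = X₀ * Y := mul_left_cancel (a := p) (by rw [hXY, hX₀, mul_assoc])
    have hX' : q * X₀ ∈ MonoidHom.mker φ := by
      rw [MonoidHom.mem_mker, ← map_exchange, ← hX₀]
      exact X.2
    have hA' : A = ⟨q * X₀, hX'⟩ * Y := Subtype.ext (by rw [hAC, hC, ← mul_assoc]; rfl)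
    exact (hA.isUnit_or_isUnit hA').resolve_left (not_isUnit_of_val hX' hq)
  refine ⟨hpC, not_isUnit_of_val hpC hp, fun X Y hXY => ?_⟩
  have hXY' : p * C = X * Y := congrArg Subtype.val hXY
  rcases hp_dvd _ _ (hXY' ▸ dvd_mul_right p C) with hX | hY
  · exact Or.inr (unit_of_dvd X Y hXY' hX)
  · exact Or.inl (unit_of_dvd Y X (hXY'.trans (mul_comm _ _)) hY)

section Letter

variable {G : Type*}

theorem ofAdd_singleton_dvd_iff {g : G} {x : FreeCM G} :
    Multiplicative.ofAdd ({g} : Multiset G) ∣ x ↔ g ∈ Multiplicative.toAdd x := by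
  constructor
  · rintro ⟨y, rfl⟩
    exact Multiset.mem_add.mpr (Or.inl (Multiset.mem_singleton_self g))
  · intro hg
    obtain ⟨t, ht⟩ := Multiset.exists_cons_of_mem hg
    exact ⟨Multiplicative.ofAdd t, congrArg Multiplicative.ofAdd ht⟩

abbrev letter (N : Type*) [CommMonoid N] (g : G) : FreeCM G × N :=
  (Multiplicative.ofAdd {g}, 1)

variable {N : Type*} [CommMonoid N]

theorem letter_dvd_iff {g : G} {x : FreeCM G × N} :
    letter N g ∣ x ↔ g ∈ Multiplicative.toAdd x.1 := by
  rw [prod_dvd_iff, ofAdd_singleton_dvd_iff]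
  exact and_iff_left (one_dvd _)

theorem letter_dvd_or_dvd {g : G} {x y : FreeCM G × N} (h : letter N g ∣ x * y) :
    letter N g ∣ x ∨ letter N g ∣ y := by
  simp only [letter_dvd_iff] at h ⊢
  exact Multiset.mem_add.mp h

theorem not_isUnit_letter (g : G) : ¬IsUnit (letter N g) := fun h =>
  Multiset.notMem_zero g (letter_dvd_iff.mp (isUnit_iff_dvd_one.mp h))

end Letter

theorem TBlockPhi_letter_eq {G : Type*} [AddCommGroup G] {n : ℕ} {U : Fin n → Type*}
    [∀ i, CommGroup (U i)] {s : Fin n → ℕ} (iota : Tm U s →* Multiplicative G) (q : Tm U s) :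
    TBlockPhi G U s iota (letter (Tm U s) (Multiplicative.toAdd (iota q))) =
      TBlockPhi G U s iota (1, q) := by
  change Multiplicative.ofAdd (Multiset.sum {Multiplicative.toAdd (iota q)}) * iota 1 =
    sigmaHom G 1 * iota q
  rw [Multiset.sum_singleton, map_one, map_one, mul_one, one_mul, ofAdd_toAdd]

theorem tblock_exchange_prime_for_class_general
    {G : Type*} [AddCommGroup G]
    {n : ℕ} (U : Fin n → Type*) [∀ i, CommGroup (U i)]
    (s : Fin n → ℕ)
    (iota : Tm U s →* Multiplicative G)
    (A : ↥(TBlock G U s iota)) (hA : Irreducible A)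
    (q : Tm U s) (hq : Irreducible q)
    (C : Fm G U s)
    (hdvd : (A : Fm G U s) = ((1 : FreeCM G), q) * C) :
    ∃ h : (Multiplicative.ofAdd ({Multiplicative.toAdd (iota q)} : Multiset G),
        (1 : Tm U s)) * C ∈ TBlock G U s iota,
      Irreducible (⟨(Multiplicative.ofAdd ({Multiplicative.toAdd (iota q)} : Multiset G),
        (1 : Tm U s)) * C, h⟩ : ↥(TBlock G U s iota)) := by
  have hq' : ¬IsUnit ((1, q) : Fm G U s) := fun h => hq.not_isUnit (h.map (MonoidHom.snd _ _))
  exact exists_irreducible_mker_of_exchange (TBlockPhi_letter_eq iota q) (not_isUnit_letter _)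
    (fun _ _ => letter_dvd_or_dvd) hq' A hA hdvd

/-- Lemma 3.1(1): if `A` is an atom of the `T`-block monoid `B`, `q` is an atom of
`T` dividing `A` in `F` (say `A = q·C`) and `g = [q] ∈ G`, then `g·q^{-1}·A` lies
in `B` and is an atom of `B`. -/
theorem tblock_exchange_prime_for_class
    {G : Type*} [AddCommGroup G] [Fintype G] (hG : 1 < Fintype.card G)
    {n : ℕ} (hn : 0 < n) (U : Fin n → Type*) [∀ i, CommGroup (U i)]
    (s : Fin n → ℕ) (hs : ∀ i, 1 ≤ s i)
    (iota : Tm U s →* Multiplicative G)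
    (A : ↥(TBlock G U s iota)) (hA : Irreducible A)
    (q : Tm U s) (hq : Irreducible q)
    (C : Fm G U s)
    (hdvd : (A : Fm G U s) = ((1 : FreeCM G), q) * C) :
    ∃ h : (Multiplicative.ofAdd ({Multiplicative.toAdd (iota q)} : Multiset G),
        (1 : Tm U s)) * C ∈ TBlock G U s iota,
      Irreducible (⟨(Multiplicative.ofAdd ({Multiplicative.toAdd (iota q)} : Multiset G),
        (1 : Tm U s)) * C, h⟩ : ↥(TBlock G U s iota)) :=
  tblock_exchange_prime_for_class_general U s iota A hA q hq C hdvd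

end
end ArXivSeminormal
end

section
/- Assume Setting (S). Let A ∈ B be an atom of B, let i ∈ [1,n] and ε ∈ D̂_i^×, let q = ε q_{i,1} ⋯ q_{i,s_i} be an atom of T, set g = [q] ∈ G, and suppose the letter g occurs in the F(G)-component of A. Then the element q·g^{−1}·A of F (obtained from A by removing one occurrence of the letter g and multiplying the T-component by q) lies in B and is either an atom of B or a product of two atoms of B. -/
namespace ArXivSeminormal

attribute [local instance] Classical.propDecidable

noncomputable section

/-! ### Generic factorization theory in commutative monoids -/

variable {M : Type*} [CommMonoid M]

set_option linter.unusedSectionVars false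

section Aux

variable {G : Type*} [AddCommGroup G] {n : ℕ} {U : Fin n → Type*} [∀ i, CommGroup (U i)]
  {s : Fin n → ℕ} {iota : Tm U s →* Multiplicative G}

lemma phi_apply (x : Fm G U s) :
    TBlockPhi G U s iota x
      = Multiplicative.ofAdd (Multiplicative.toAdd x.1).sum * iota x.2 := rfl

lemma mem_tblock_iff {x : Fm G U s} :
    x ∈ TBlock G U s iota ↔ TBlockPhi G U s iota x = 1 := Iff.rfl

lemma memD_iff {i : Fin n} {x : U i × Multiplicative (Fin (s i) →₀ ℕ)} :
    x ∈ seminormalD (U i) (s i) ↔ (x = 1 ∨ ∀ j, 1 ≤ Multiplicative.toAdd x.2 j) := Iff.rfl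

lemma D_coords {i : Fin n} (x : ↥(seminormalD (U i) (s i))) (hx : x ≠ 1) (j : Fin (s i)) :
    1 ≤ Multiplicative.toAdd x.val.2 j := by
  rcases (memD_iff.mp x.2) with h | h
  · exact absurd (Subtype.ext h) hx
  · exact h j

/-- A norm on `F` used to prove that the `T`-block monoid is atomic. -/
def nuF (x : Fm G U s) : ℕ :=
  Multiset.card (Multiplicative.toAdd x.1)
    + ∑ i, ∑ j, Multiplicative.toAdd (x.2 i).val.2 j

lemma nuF_mul (x y : Fm G U s) : nuF (x * y) = nuF x + nuF y := by
  simp [nuF, toAdd_mul, Finsupp.add_apply, Finset.sum_add_distrib]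
  ring

lemma nuF_one : nuF (1 : Fm G U s) = 0 := by simp [nuF]

lemma nuF_eq_zero (hs : ∀ i, 1 ≤ s i) {x : Fm G U s} (h : nuF x = 0) : x = 1 := by
  rw [nuF] at h
  have h1 : Multiset.card (Multiplicative.toAdd x.1) = 0 := by omega
  have h2 : ∑ i, ∑ j, Multiplicative.toAdd (x.2 i).val.2 j = 0 := by omega
  have hx1 : x.1 = 1 := by
    have : Multiplicative.toAdd x.1 = 0 := Multiset.card_eq_zero.mp h1
    have := congrArg Multiplicative.ofAdd this
    simpa using this
  have hx2 : x.2 = 1 := by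
    funext i
    have hzero : ∀ j, Multiplicative.toAdd (x.2 i).val.2 j = 0 := by
      intro j
      have hi := (Finset.sum_eq_zero_iff.mp h2) i (Finset.mem_univ i)
      exact (Finset.sum_eq_zero_iff.mp hi) j (Finset.mem_univ j)
    rcases memD_iff.mp (x.2 i).2 with h | h
    · exact Subtype.ext h
    · have := h ⟨0, hs i⟩
      rw [hzero ⟨0, hs i⟩] at this
      omega
  exact Prod.ext hx1 hx2

lemma isUnit_tb_iff (hs : ∀ i, 1 ≤ s i) {x : ↥(TBlock G U s iota)} :
    IsUnit x ↔ x = 1 := by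
  constructor
  · rintro ⟨u, rfl⟩
    have h1 : ((u : ↥(TBlock G U s iota)) : Fm G U s)
        * ((↑u⁻¹ : ↥(TBlock G U s iota)) : Fm G U s) = 1 := by
      rw [← Submonoid.coe_mul, u.mul_inv, Submonoid.coe_one]
    have h2 := congrArg nuF h1
    rw [nuF_mul, nuF_one] at h2
    have : nuF ((u : ↥(TBlock G U s iota)) : Fm G U s) = 0 := by omega
    exact Subtype.ext ((nuF_eq_zero hs this).trans rfl)
  · rintro rfl; exact isUnit_one

lemma exists_factorization_tb (hs : ∀ i, 1 ≤ s i) :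
    ∀ (N : ℕ) (x : ↥(TBlock G U s iota)), nuF (x : Fm G U s) ≤ N → x ≠ 1 →
      ∃ l : List ↥(TBlock G U s iota), (∀ b ∈ l, Irreducible b) ∧ l.prod = x := by
  intro N
  induction N with
  | zero =>
    intro x hx hne
    exact absurd (Subtype.ext (nuF_eq_zero hs (Nat.le_zero.mp hx))) hne
  | succ N ih =>
    intro x hx hne
    by_cases hirr : Irreducible x
    · exact ⟨[x], by simp [hirr], by simp⟩
    · have hnu : ¬ IsUnit x := by rw [isUnit_tb_iff hs]; exact hne
      rw [irreducible_iff] at hirr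
      push_neg at hirr
      obtain ⟨a, b, hab, ha, hb⟩ := hirr hnu
      have ha1 : a ≠ 1 := fun h => ha (h ▸ isUnit_one)
      have hb1 : b ≠ 1 := fun h => hb (h ▸ isUnit_one)
      have hnua : nuF (a : Fm G U s) ≠ 0 :=
        fun h => ha1 (Subtype.ext (nuF_eq_zero hs h))
      have hnub : nuF (b : Fm G U s) ≠ 0 :=
        fun h => hb1 (Subtype.ext (nuF_eq_zero hs h))
      have hsum : nuF (x : Fm G U s) = nuF (a : Fm G U s) + nuF (b : Fm G U s) := by
        rw [hab, Submonoid.coe_mul, nuF_mul]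
      obtain ⟨la, hla, hpa⟩ := ih a (by omega) ha1
      obtain ⟨lb, hlb, hpb⟩ := ih b (by omega) hb1
      refine ⟨la ++ lb, ?_, by rw [List.prod_append, hpa, hpb, hab]⟩
      intro c hc
      rcases List.mem_append.mp hc with h | h
      · exact hla c h
      · exact hlb c h

lemma mul_q_cancel {x y q : Tm U s} (h : x * q = y * q) : x = y := by
  funext j
  apply Subtype.ext
  have hj : (x j).val * (q j).val = (y j).val * (q j).val :=
    congrArg Subtype.val (congrFun h j)
  exact mul_right_cancel hj

/-- Evaluation of the `i`-th `T`-component, as a monoid hom on the `T`-block monoid. -/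
def evalHom (G : Type*) [AddCommGroup G] {n : ℕ} (U : Fin n → Type*) [∀ i, CommGroup (U i)]
    (s : Fin n → ℕ) (iota : Tm U s →* Multiplicative G) (i : Fin n) :
    ↥(TBlock G U s iota) →* ↥(seminormalD (U i) (s i)) :=
  (Pi.evalMonoidHom (fun j => ↥(seminormalD (U j) (s j))) i).comp
    ((MonoidHom.snd _ _).comp (TBlock G U s iota).subtype)

lemma evalHom_apply (i : Fin n) (x : ↥(TBlock G U s iota)) :
    evalHom G U s iota i x = (x : Fm G U s).2 i := rfl

end Aux

/-- Lemma 3.1(2): if `A` is an atom of the `T`-block monoid `B`,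
`q = ε q_{i,1} ⋯ q_{i,s_i}` is an atom of `T` and the letter `g = [q]` occurs in the
`F(G)`-component of `A`, then `q·g^{-1}·A` lies in `B` and is an atom of `B` or a
product of two atoms of `B`. -/
theorem tblock_exchange_class_for_prime
    {G : Type*} [AddCommGroup G] [Fintype G] (hG : 1 < Fintype.card G)
    {n : ℕ} (hn : 0 < n) (U : Fin n → Type*) [∀ i, CommGroup (U i)]
    (s : Fin n → ℕ) (hs : ∀ i, 1 ≤ s i)
    (iota : Tm U s →* Multiplicative G)
    [DecidableEq G]
    (A : ↥(TBlock G U s iota)) (hA : Irreducible A)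
    (i : Fin n) (ε : U i)
    (hmem : ((ε, Multiplicative.ofAdd (allOnes (s i))) :
      U i × Multiplicative (Fin (s i) →₀ ℕ)) ∈ seminormalD (U i) (s i))
    (q : Tm U s)
    (hqdef : q = Pi.mulSingle i ⟨(ε, Multiplicative.ofAdd (allOnes (s i))), hmem⟩)
    (hq : Irreducible q)
    (hg : Multiplicative.toAdd (iota q) ∈ Multiplicative.toAdd (A : Fm G U s).1) :
    ∃ h : (Multiplicative.ofAdd
        ((Multiplicative.toAdd (A : Fm G U s).1).erase (Multiplicative.toAdd (iota q))),
        (A : Fm G U s).2 * q) ∈ TBlock G U s iota,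
      Irreducible (⟨_, h⟩ : ↥(TBlock G U s iota)) ∨
        ∃ b c : ↥(TBlock G U s iota), Irreducible b ∧ Irreducible c ∧
          (⟨_, h⟩ : ↥(TBlock G U s iota)) = b * c := by
  classical
  have hqi : q i = ⟨(ε, Multiplicative.ofAdd (allOnes (s i))), hmem⟩ := by
    rw [hqdef]; exact Pi.mulSingle_eq_same i _
  have hqj : ∀ j, j ≠ i → q j = 1 := by
    intro j hj; rw [hqdef]; exact Pi.mulSingle_eq_of_ne hj _
  set j₀ : Fin (s i) := ⟨0, hs i⟩ with hj₀
  have hall : ∀ j, (allOnes (s i)) j = 1 := by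
    intro j; simp [allOnes]
  set g₀ : G := Multiplicative.toAdd (iota q) with hg₀
  set SA : Multiset G := Multiplicative.toAdd (A : Fm G U s).1 with hSA
  set AstarF : Fm G U s :=
    (Multiplicative.ofAdd (SA.erase g₀), (A : Fm G U s).2 * q) with hAstarF
  have hA0 : Multiplicative.ofAdd SA.sum * iota (A : Fm G U s).2 = 1 := by
    rw [← phi_apply]; exact mem_tblock_iff.mp A.2
  have hsum : g₀ + (SA.erase g₀).sum = SA.sum := Multiset.sum_erase hg
  have hmemB : AstarF ∈ TBlock G U s iota := by
    rw [mem_tblock_iff, phi_apply]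
    show Multiplicative.ofAdd (Multiplicative.toAdd
        (Multiplicative.ofAdd (SA.erase g₀))).sum * iota ((A : Fm G U s).2 * q) = 1
    rw [toAdd_ofAdd, map_mul]
    have h1 : Multiplicative.ofAdd SA.sum
        = iota q * Multiplicative.ofAdd (SA.erase g₀).sum := by
      rw [← ofAdd_toAdd (iota q), ← hg₀, ← ofAdd_add, hsum]
    rw [h1] at hA0
    calc Multiplicative.ofAdd (SA.erase g₀).sum * (iota (A : Fm G U s).2 * iota q)
        = iota q * Multiplicative.ofAdd (SA.erase g₀).sum * iota (A : Fm G U s).2 := by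
          rw [mul_comm (iota q), mul_assoc, mul_comm (iota (A : Fm G U s).2)]
      _ = 1 := hA0
  refine ⟨hmemB, ?_⟩
  -- the q-element of D_i is not 1
  have hqine : (⟨(ε, Multiplicative.ofAdd (allOnes (s i))), hmem⟩ :
      ↥(seminormalD (U i) (s i))) ≠ 1 := by
    intro h
    have h2 := congrArg (fun z : ↥(seminormalD (U i) (s i)) =>
      Multiplicative.toAdd z.val.2 j₀) h
    simp [hall j₀] at h2
  -- A* is not trivial
  have hAstar_ne : (⟨AstarF, hmemB⟩ : ↥(TBlock G U s iota)) ≠ 1 := by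
    intro h
    have h1 : AstarF = 1 := congrArg Subtype.val h
    have h2 : ((A : Fm G U s).2 * q) i = 1 := by
      have := congrArg Prod.snd h1
      exact congrFun this i
    have h3 := congrArg (fun z : ↥(seminormalD (U i) (s i)) =>
      Multiplicative.toAdd z.val.2 j₀) h2
    simp only [Pi.mul_apply, hqi] at h3
    have h4 : Multiplicative.toAdd (((A : Fm G U s).2 i).val.2) j₀
        + (allOnes (s i)) j₀ = 0 := h3
    rw [hall j₀] at h4
    omega
  -- the contradiction for factorizations of length ≥ 3
  have hcontra : ∀ (m : Multiset ↥(TBlock G U s iota)),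
      m.prod = (⟨AstarF, hmemB⟩ : ↥(TBlock G U s iota)) →
      (∀ x ∈ m, Irreducible x) → 3 ≤ Multiset.card m → False := by
    intro m hm hirr hcard
    have htot : (Multiset.map (evalHom G U s iota i) m).prod
        = (A : Fm G U s).2 i * q i := by
      rw [← map_multiset_prod, hm]
      exact evalHom_apply i _
    -- there exists a member with non-trivial i-component
    have hexb : ∃ b ∈ m, evalHom G U s iota i b ≠ 1 := by
      by_contra hno
      push_neg at hno
      have h1 : (Multiset.map (evalHom G U s iota i) m).prod = 1 := by
        apply Multiset.prod_eq_one
        intro x hx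
        obtain ⟨y, hy, rfl⟩ := Multiset.mem_map.mp hx
        exact hno y hy
      rw [htot] at h1
      have h3 := congrArg (fun z : ↥(seminormalD (U i) (s i)) =>
        Multiplicative.toAdd z.val.2 j₀) h1
      simp only [hqi] at h3
      have h4 : Multiplicative.toAdd (((A : Fm G U s).2 i).val.2) j₀
          + (allOnes (s i)) j₀ = 0 := h3
      rw [hall j₀] at h4
      omega
    obtain ⟨b, hbm, hbne⟩ := hexb
    have hm0 : m = b ::ₘ m.erase b := (Multiset.cons_erase hbm).symm
    -- main claim: a sub-product of one or two atoms whose T-part is divisible by q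
    have hmain : ∃ (Cm : ↥(TBlock G U s iota)) (rest : Multiset ↥(TBlock G U s iota))
        (t' : Tm U s), Cm * rest.prod = (⟨AstarF, hmemB⟩ : ↥(TBlock G U s iota)) ∧
        1 ≤ Multiset.card rest ∧ (∀ x ∈ rest, Irreducible x) ∧
        t' * q = (Cm : Fm G U s).2 := by
      by_cases hc : ∃ c ∈ m.erase b, evalHom G U s iota i c ≠ 1
      · -- two factors with non-trivial i-component
        obtain ⟨c, hcm, hcne⟩ := hc
        have hm1 : m = b ::ₘ c ::ₘ (m.erase b).erase c := by
          rw [Multiset.cons_erase hcm]; exact hm0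
        have hbg := D_coords (evalHom G U s iota i b) hbne
        have hcg := D_coords (evalHom G U s iota i c) hcne
        set eb := evalHom G U s iota i b with heb
        set ec := evalHom G U s iota i c with hec
        set w : Fin (s i) →₀ ℕ := Finsupp.equivFunOnFinite.symm
          (fun j => Multiplicative.toAdd eb.val.2 j
            + Multiplicative.toAdd ec.val.2 j - 1) with hw
        have hwval : ∀ j, w j = Multiplicative.toAdd eb.val.2 j
            + Multiplicative.toAdd ec.val.2 j - 1 := by
          intro j; simp [hw]
        have hwmem : ((eb.val.1 * ec.val.1 * ε⁻¹, Multiplicative.ofAdd w) :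
            U i × Multiplicative (Fin (s i) →₀ ℕ)) ∈ seminormalD (U i) (s i) := by
          refine memD_iff.mpr (Or.inr ?_)
          intro j
          have h1 := hbg j
          have h2 := hcg j
          have h3 : Multiplicative.toAdd (Multiplicative.ofAdd w) j = w j := rfl
          rw [h3, hwval j]
          omega
        have hd : (⟨_, hwmem⟩ : ↥(seminormalD (U i) (s i)))
            * ⟨(ε, Multiplicative.ofAdd (allOnes (s i))), hmem⟩ = eb * ec := by
          apply Subtype.ext
          refine Prod.ext ?_ ?_
          · exact inv_mul_cancel_right _ ε
          · show Multiplicative.ofAdd w * Multiplicative.ofAdd (allOnes (s i))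
              = eb.val.2 * ec.val.2
            rw [← ofAdd_add, ← ofAdd_toAdd (eb.val.2 * ec.val.2)]
            congr 1
            ext j
            have h1 := hbg j
            have h2 := hcg j
            have h3 : Multiplicative.toAdd (eb.val.2 * ec.val.2) j
                = Multiplicative.toAdd eb.val.2 j + Multiplicative.toAdd ec.val.2 j := rfl
            rw [Finsupp.add_apply, hwval j, hall j, h3]
            omega
        refine ⟨b * c, (m.erase b).erase c,
          Function.update ((b * c : ↥(TBlock G U s iota)) : Fm G U s).2 i ⟨_, hwmem⟩,
          ?_, ?_, ?_, ?_⟩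
        · calc b * c * ((m.erase b).erase c).prod
              = (b ::ₘ c ::ₘ (m.erase b).erase c).prod := by
                rw [Multiset.prod_cons, Multiset.prod_cons, mul_assoc]
            _ = m.prod := by rw [← hm1]
            _ = _ := hm
        · have := congrArg Multiset.card hm1
          simp at this
          omega
        · intro x hx
          exact hirr x (Multiset.mem_of_le (le_trans (Multiset.erase_le _ _)
            (Multiset.erase_le _ _)) hx)
        · funext j
          by_cases hji : j = i
          · subst hji
            rw [Pi.mul_apply, Function.update_self, hqi, hd]
            rw [← evalHom_apply, map_mul]
          · rw [Pi.mul_apply, Function.update_of_ne hji, hqj j hji, mul_one]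
      · -- a single factor with non-trivial i-component
        push_neg at hc
        have hrest1 : (Multiset.map (evalHom G U s iota i) (m.erase b)).prod = 1 := by
          apply Multiset.prod_eq_one
          intro x hx
          obtain ⟨y, hy, rfl⟩ := Multiset.mem_map.mp hx
          exact hc y hy
        have heb : evalHom G U s iota i b = (A : Fm G U s).2 i * q i := by
          rw [← htot]
          conv_rhs => rw [hm0]
          rw [Multiset.map_cons, Multiset.prod_cons, hrest1, mul_one]
        refine ⟨b, m.erase b,
          Function.update ((b : Fm G U s)).2 i ((A : Fm G U s).2 i), ?_, ?_, ?_, ?_⟩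
        · calc b * (m.erase b).prod = (b ::ₘ m.erase b).prod :=
              (Multiset.prod_cons _ _).symm
            _ = m.prod := by rw [← hm0]
            _ = _ := hm
        · have := congrArg Multiset.card hm0
          simp at this
          omega
        · intro x hx
          exact hirr x (Multiset.mem_of_le (Multiset.erase_le _ _) hx)
        · funext j
          by_cases hji : j = i
          · subst hji
            rw [Pi.mul_apply, Function.update_self, ← heb]
            rfl
          · rw [Pi.mul_apply, Function.update_of_ne hji, hqj j hji, mul_one]
    obtain ⟨Cm, rest, t', hCr, hrc, hri, ht'⟩ := hmain
    set qhat : Fm G U s := (1, q) with hqhat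
    set ghat : Fm G U s := (Multiplicative.ofAdd ({g₀} : Multiset G), 1) with hghat
    set C' : Fm G U s :=
      ((Cm : Fm G U s).1 * Multiplicative.ofAdd ({g₀} : Multiset G), t') with hC'
    have hC'q : C' * qhat = (Cm : Fm G U s) * ghat := by
      refine Prod.ext ?_ ?_
      · show (Cm : Fm G U s).1 * Multiplicative.ofAdd ({g₀} : Multiset G) * 1
          = (Cm : Fm G U s).1 * Multiplicative.ofAdd ({g₀} : Multiset G)
        rw [mul_one]
      · show t' * q = (Cm : Fm G U s).2 * 1
        rw [mul_one, ht']
    have hkey : AstarF * ghat = (A : Fm G U s) * qhat := by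
      refine Prod.ext ?_ ?_
      · show Multiplicative.ofAdd (SA.erase g₀) * Multiplicative.ofAdd ({g₀} : Multiset G)
          = (A : Fm G U s).1 * 1
        rw [mul_one, ← ofAdd_add, add_comm, Multiset.singleton_add,
          Multiset.cons_erase hg, hSA, ofAdd_toAdd]
      · show ((A : Fm G U s).2 * q) * 1 = (A : Fm G U s).2 * q
        rw [mul_one]
    have hphiq : TBlockPhi G U s iota qhat = iota q := by
      rw [phi_apply]
      show Multiplicative.ofAdd (Multiplicative.toAdd
        (1 : FreeCM G)).sum * iota q = iota q
      simp
    have hphig : TBlockPhi G U s iota ghat = iota q := by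
      rw [phi_apply]
      show Multiplicative.ofAdd (Multiplicative.toAdd (Multiplicative.ofAdd
        ({g₀} : Multiset G))).sum * iota 1 = iota q
      rw [toAdd_ofAdd, Multiset.sum_singleton, map_one, mul_one, hg₀, ofAdd_toAdd]
    have hC'mem : C' ∈ TBlock G U s iota := by
      rw [mem_tblock_iff]
      have h1 := congrArg (TBlockPhi G U s iota) hC'q
      rw [map_mul, map_mul, hphiq, hphig, mem_tblock_iff.mp Cm.2, one_mul] at h1
      calc TBlockPhi G U s iota C'
          = TBlockPhi G U s iota C' * iota q * (iota q)⁻¹ := by group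
        _ = iota q * (iota q)⁻¹ := by rw [h1]
        _ = 1 := mul_inv_cancel _
    have hAeq : (A : Fm G U s) = C' * ((rest.prod : ↥(TBlock G U s iota)) : Fm G U s) := by
      have h1 : (A : Fm G U s) * qhat
          = (C' * ((rest.prod : ↥(TBlock G U s iota)) : Fm G U s)) * qhat := by
        calc (A : Fm G U s) * qhat = AstarF * ghat := hkey.symm
          _ = ((Cm * rest.prod : ↥(TBlock G U s iota)) : Fm G U s) * ghat := by
              rw [hCr]
          _ = ((Cm : Fm G U s) * ((rest.prod : ↥(TBlock G U s iota)) : Fm G U s))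
              * ghat := by rw [Submonoid.coe_mul]
          _ = ((Cm : Fm G U s) * ghat)
              * ((rest.prod : ↥(TBlock G U s iota)) : Fm G U s) :=
              mul_right_comm _ _ _
          _ = (C' * qhat) * ((rest.prod : ↥(TBlock G U s iota)) : Fm G U s) := by
              rw [← hC'q]
          _ = (C' * ((rest.prod : ↥(TBlock G U s iota)) : Fm G U s)) * qhat :=
              mul_right_comm _ _ _
      have h2 := congrArg Prod.fst h1
      have h3 := congrArg Prod.snd h1
      refine Prod.ext ?_ (mul_q_cancel h3)
      simpa using h2
    have hfin : A = (⟨C', hC'mem⟩ : ↥(TBlock G U s iota)) * rest.prod :=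
      Subtype.ext (by rw [Submonoid.coe_mul]; exact hAeq)
    rcases hA.isUnit_or_isUnit hfin with h | h
    · rw [isUnit_tb_iff hs] at h
      have h1 : C' = 1 := congrArg Subtype.val h
      have h2' : (Cm : Fm G U s).1 * Multiplicative.ofAdd ({g₀} : Multiset G)
          = (1 : FreeCM G) := congrArg Prod.fst h1
      have h3 := congrArg (fun z : FreeCM G => Multiset.card (Multiplicative.toAdd z)) h2'
      simp only [toAdd_mul, toAdd_ofAdd, Multiset.card_add, Multiset.card_singleton,
        toAdd_one, Multiset.card_zero] at h3
      omega
    · rw [isUnit_tb_iff hs] at h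
      obtain ⟨x, hx⟩ := Multiset.card_pos_iff_exists_mem.mp
        (show 0 < Multiset.card rest by omega)
      have hux : IsUnit x := by
        have hdvd := Multiset.dvd_prod hx
        rw [h] at hdvd
        exact isUnit_of_dvd_one hdvd
      exact (hri x hx).1 hux
  -- conclude from an arbitrary factorization of A*
  obtain ⟨l, hl, hlp⟩ := exists_factorization_tb hs (nuF AstarF) ⟨AstarF, hmemB⟩
    le_rfl hAstar_ne
  match l, hl, hlp with
  | [], hl, hlp =>
    exact absurd (by simpa using hlp.symm) hAstar_ne
  | [b], hl, hlp =>
    left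
    have hb : b = (⟨AstarF, hmemB⟩ : ↥(TBlock G U s iota)) := by simpa using hlp
    exact hb ▸ hl b (by simp)
  | [b, c], hl, hlp =>
    right
    exact ⟨b, c, hl b (by simp), hl c (by simp), by simpa using hlp.symm⟩
  | b :: c :: d :: tl, hl, hlp =>
    exfalso
    refine hcontra ↑(b :: c :: d :: tl) ?_ ?_ ?_
    · rw [Multiset.prod_coe]
      exact hlp
    · intro x hx
      exact hl x (by simpa using hx)
    · simp

end
end ArXivSeminormal
end
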